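/- arXiv:1903.03912 — 8 statements merged into one kernel-verified Lean document; each statement's English description precedes it below -/
import Mathlib

section
/- Let E be a Banach f-algebra and (x_α) a net in E. If x_α →mw x, then |x_α| →mw |x|. -/
open Filter Topology

/-!
Since `||x_α| - |a|| ≤ |x_α - a|` and multiplication by `u ≥ 0` is monotone, the net
`||x_α| - |a|| * u` is squeezed between `0` and `|x_α - a| * u`. Positive functionals respect
such a squeeze, and on a lattice with solid norm every continuous functional `f` is a difference
`f⁺ - (f⁺ - f)` of positive continuous ones, where `f⁺` is given by the Riesz–Kantorovich formula
(additive on the positive cone by the Riesz decomposition property). Hence weak convergence to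
`0` passes from the larger net to the smaller one.
-/

/-- A net `x : ι → E` (along a filter `l`) in a Banach `f`-algebra is *multiplicative weak
convergent* (`mw`-convergent) to `a` if `|x i - a| * u` converges weakly to `0` for every
`u ≥ 0`, i.e. `f (|x i - a| * u) → 0` for every continuous linear functional `f` on `E`. -/
def MWTendsto {E : Type*} [NonUnitalNormedCommRing E] [Lattice E] [NormedSpace ℝ E]
    {ι : Type*} (l : Filter ι) (x : ι → E) (a : E) : Prop :=
  ∀ u : E, 0 ≤ u → ∀ f : E →L[ℝ] ℝ, Tendsto (fun i => f (|x i - a| * u)) l (𝓝 0)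

theorem sub_inf_mem_Icc {E : Type*} [AddCommGroup E] [Lattice E] [AddLeftMono E] {x y z : E}
    (hy : 0 ≤ y) (hzxy : z ≤ x + y) : z - z ⊓ x ∈ Set.Icc 0 y := by
  refine ⟨sub_nonneg.2 inf_le_left, ?_⟩
  rw [sub_le_comm]
  exact le_inf (sub_le_self z hy) (sub_le_iff_le_add.2 hzxy)

namespace ContinuousLinearMap

variable {E : Type*} [NormedAddCommGroup E] [Lattice E] [AddLeftMono E] [HasSolidNorm E]
  [NormedSpace ℝ E] (f : E →L[ℝ] ℝ)

/-- The Riesz–Kantorovich formula for `f⁺` on the positive cone (junk for `x ≱ 0`). -/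
noncomputable def supIcc (x : E) : ℝ :=
  sSup (f '' Set.Icc 0 x)

theorem apply_le_of_mem_Icc {x y : E} (hy : y ∈ Set.Icc 0 x) : f y ≤ ‖f‖ * ‖x‖ := by
  have hyx : ‖y‖ ≤ ‖x‖ :=
    norm_le_norm_of_abs_le_abs ((abs_of_nonneg hy.1).trans_le (hy.2.trans (le_abs_self x)))
  calc f y ≤ ‖f y‖ := Real.le_norm_self _
    _ ≤ ‖f‖ * ‖y‖ := f.le_opNorm y
    _ ≤ ‖f‖ * ‖x‖ := by gcongr

theorem bddAbove_image_Icc (x : E) : BddAbove (f '' Set.Icc 0 x) :=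
  ⟨‖f‖ * ‖x‖, Set.forall_mem_image.2 fun _ hy => f.apply_le_of_mem_Icc hy⟩

theorem le_supIcc {x y : E} (hy : y ∈ Set.Icc 0 x) : f y ≤ f.supIcc x :=
  le_csSup (f.bddAbove_image_Icc x) ⟨y, hy, rfl⟩

theorem supIcc_le_iff {x : E} (hx : 0 ≤ x) {r : ℝ} :
    f.supIcc x ≤ r ↔ ∀ y ∈ Set.Icc 0 x, f y ≤ r := by
  rw [supIcc, csSup_le_iff (f.bddAbove_image_Icc x) ⟨f 0, 0, ⟨le_rfl, hx⟩, rfl⟩,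
    Set.forall_mem_image]

theorem supIcc_nonneg {x : E} (hx : 0 ≤ x) : 0 ≤ f.supIcc x := by
  simpa using f.le_supIcc ⟨le_rfl, hx⟩

theorem supIcc_le_opNorm_mul {x : E} (hx : 0 ≤ x) : f.supIcc x ≤ ‖f‖ * ‖x‖ :=
  (f.supIcc_le_iff hx).2 fun _ hy => f.apply_le_of_mem_Icc hy

theorem supIcc_add {x y : E} (hx : 0 ≤ x) (hy : 0 ≤ y) :
    f.supIcc (x + y) = f.supIcc x + f.supIcc y := by
  refine le_antisymm ((f.supIcc_le_iff (add_nonneg hx hy)).2 fun z hz => ?_) ?_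
  · -- Riesz decomposition: `z = z ⊓ x + (z - z ⊓ x)` with the summands in `[0, x]` and `[0, y]`.
    calc f z = f (z ⊓ x) + f (z - z ⊓ x) := by rw [← map_add, add_sub_cancel]
      _ ≤ f.supIcc x + f.supIcc y :=
        add_le_add (f.le_supIcc ⟨le_inf hz.1 hx, inf_le_right⟩)
          (f.le_supIcc (sub_inf_mem_Icc hy hz.2))
  · rw [← le_sub_iff_add_le, f.supIcc_le_iff hx]
    intro v hv
    rw [le_sub_iff_add_le', ← le_sub_iff_add_le, f.supIcc_le_iff hy]
    intro w hw
    rw [le_sub_iff_add_le', ← map_add]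
    exact f.le_supIcc ⟨add_nonneg hv.1 hw.1, add_le_add hv.2 hw.2⟩

theorem supIcc_zero : f.supIcc 0 = 0 := by
  have := f.supIcc_add (le_refl (0 : E)) le_rfl
  rw [add_zero] at this
  linarith

noncomputable def supIccExt (x : E) : ℝ :=
  f.supIcc x⁺ - f.supIcc x⁻

theorem supIccExt_sub {u v : E} (hu : 0 ≤ u) (hv : 0 ≤ v) :
    f.supIccExt (u - v) = f.supIcc u - f.supIcc v := by
  have hsplit : (u - v)⁺ + v = u + (u - v)⁻ :=
    sub_eq_sub_iff_add_eq_add.1 (posPart_sub_negPart (u - v))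
  have := congrArg f.supIcc hsplit
  rw [f.supIcc_add (posPart_nonneg _) hv, f.supIcc_add hu (negPart_nonneg _)] at this
  rw [supIccExt]
  linarith

theorem supIccExt_of_nonneg {x : E} (hx : 0 ≤ x) : f.supIccExt x = f.supIcc x := by
  simpa [f.supIcc_zero] using f.supIccExt_sub hx le_rfl

theorem supIccExt_add (x y : E) : f.supIccExt (x + y) = f.supIccExt x + f.supIccExt y := by
  have hxy : x + y = (x⁺ + y⁺) - (x⁻ + y⁻) := by
    rw [add_sub_add_comm, posPart_sub_negPart, posPart_sub_negPart]
  rw [hxy, f.supIccExt_sub (add_nonneg (posPart_nonneg x) (posPart_nonneg y))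
    (add_nonneg (negPart_nonneg x) (negPart_nonneg y)),
    f.supIcc_add (posPart_nonneg x) (posPart_nonneg y),
    f.supIcc_add (negPart_nonneg x) (negPart_nonneg y), supIccExt, supIccExt]
  ring

theorem norm_supIccExt_le (x : E) : ‖f.supIccExt x‖ ≤ ‖f‖ * ‖x‖ := by
  have bound {w : E} (hw : 0 ≤ w) (hwx : w ≤ |x|) : f.supIcc w ≤ ‖f‖ * ‖x‖ :=
    (f.supIcc_le_opNorm_mul hw).trans <| by
      gcongr
      exact norm_le_norm_of_abs_le_abs ((abs_of_nonneg hw).trans_le hwx)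
  have hpos := bound (posPart_nonneg x) (sup_le (le_abs_self x) (abs_nonneg x))
  have hneg := bound (negPart_nonneg x) (sup_le (neg_le_abs x) (abs_nonneg x))
  have := f.supIcc_nonneg (posPart_nonneg x)
  have := f.supIcc_nonneg (negPart_nonneg x)
  rw [Real.norm_eq_abs, abs_le, supIccExt]
  constructor <;> linarith

noncomputable def positivePart : E →L[ℝ] ℝ :=
  (AddMonoidHom.mk' f.supIccExt f.supIccExt_add).toRealLinearMap <|
    AddMonoidHomClass.continuous_of_bound _ ‖f‖ f.norm_supIccExt_le

theorem positivePart_apply_of_nonneg {x : E} (hx : 0 ≤ x) : f.positivePart x = f.supIcc x :=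
  f.supIccExt_of_nonneg hx

theorem positivePart_nonneg {x : E} (hx : 0 ≤ x) : 0 ≤ f.positivePart x := by
  rw [f.positivePart_apply_of_nonneg hx]
  exact f.supIcc_nonneg hx

theorem le_positivePart {x : E} (hx : 0 ≤ x) : f x ≤ f.positivePart x := by
  rw [f.positivePart_apply_of_nonneg hx]
  exact f.le_supIcc ⟨hx, le_rfl⟩

theorem tendsto_apply_of_nonneg_of_le {ι : Type*} {l : Filter ι} {y z : ι → E}
    (hz : ∀ i, 0 ≤ z i) (hzy : ∀ i, z i ≤ y i)
    (hy : ∀ g : E →L[ℝ] ℝ, Tendsto (fun i => g (y i)) l (𝓝 0)) :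
    Tendsto (fun i => f (z i)) l (𝓝 0) := by
  have of_positive {g : E →L[ℝ] ℝ} (hg : ∀ x, 0 ≤ x → 0 ≤ g x) :
      Tendsto (fun i => g (z i)) l (𝓝 0) :=
    squeeze_zero (fun i => hg _ (hz i))
      (fun i => by simpa using hg _ (sub_nonneg.2 (hzy i))) (hy g)
  -- `f = f⁺ - (f⁺ - f)` is a difference of positive functionals.
  simpa using (of_positive fun _ => f.positivePart_nonneg).sub
    (of_positive (g := f.positivePart - f) fun _ hx => sub_nonneg.2 (f.le_positivePart hx))

end ContinuousLinearMap

theorem abs_abs_sub_abs_mul_le {R : Type*} [NonUnitalRing R] [Lattice R] [AddLeftMono R]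
    (hmulpos : ∀ a b : R, 0 ≤ a → 0 ≤ b → 0 ≤ a * b) (x a : R) {u : R} (hu : 0 ≤ u) :
    |(|x| - |a|)| * u ≤ |x - a| * u := by
  simpa [sub_mul] using hmulpos _ _ (sub_nonneg.2 (abs_abs_sub_abs_le x a)) hu

theorem mw_abs_general
    {E : Type*} [NonUnitalNormedCommRing E] [Lattice E]
    [CovariantClass E E (· + ·) (· ≤ ·)] [NormedSpace ℝ E]
    (hsolid : ∀ a b : E, |a| ≤ |b| → ‖a‖ ≤ ‖b‖)
    (hmulpos : ∀ a b : E, 0 ≤ a → 0 ≤ b → 0 ≤ a * b)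
    {A : Type*} [SemilatticeSup A]
    (x : A → E) (a : E) (hx : MWTendsto atTop x a) :
    MWTendsto atTop (fun α => |x α|) |a| := by
  have : HasSolidNorm E := ⟨fun _ _ h => hsolid _ _ h⟩
  intro u hu f
  exact f.tendsto_apply_of_nonneg_of_le (fun _ => hmulpos _ _ (abs_nonneg _) hu)
    (fun α => abs_abs_sub_abs_mul_le hmulpos (x α) a hu) (hx u hu)

/-- If `x_α →mw x` then `|x_α| →mw |x|`. -/
theorem mw_abs
    {E : Type*} [NonUnitalNormedCommRing E] [Lattice E]
    [CovariantClass E E (· + ·) (· ≤ ·)] [NormedSpace ℝ E] [CompleteSpace E]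
    (hsolid : ∀ a b : E, |a| ≤ |b| → ‖a‖ ≤ ‖b‖)
    (hmulpos : ∀ a b : E, 0 ≤ a → 0 ≤ b → 0 ≤ a * b)
    (hfalg : ∀ a b c : E, a ⊓ b = 0 → 0 ≤ c → (a * c) ⊓ b = 0)
    {A : Type*} [Nonempty A] [SemilatticeSup A]
    (x : A → E) (a : E) (hx : MWTendsto atTop x a) :
    MWTendsto atTop (fun α => |x α|) |a| :=
  mw_abs_general hsolid hmulpos x a hx
end

section
/- Let E be a Banach f-algebra and P : E → E a band projection, i.e., a positive linear map with P ∘ P = P and 0 ≤ P(x) ≤ x for all x ≥ 0. If a net (x_α) satisfies x_α →mw x in E, then P(x_α) →mw P(x) in E. -/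
/-!
The band projection `P` commutes with `|·|`, because `P z⁺` and `P z⁻` stay disjoint, and with
multiplication by any `u ≥ 0`: the ranges of `P` and `I - P` are disjoint, and in an `f`-algebra
multiplying by `u ≥ 0` preserves disjointness, so `P` kills `(v - P v) * u` and fixes `P v * u`.
Hence `|P xα - P a| * u = P (|xα - a| * u)`. A solid norm makes `P` contractive, so `f ∘ P` is again
a continuous functional, and weak convergence of `|xα - a| * u` to `0` transfers.
-/

open Filter Topology

section OrderedGroup

variable {E : Type*} [AddCommGroup E] [PartialOrder E] [AddLeftMono E]
  {F : Type*} [FunLike F E E] [AddMonoidHomClass F E E] {P : F}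

theorem monotone_of_map_nonneg (hpos : ∀ z, 0 ≤ z → 0 ≤ P z) : Monotone P := fun z w h => by
  simpa [map_sub] using hpos (w - z) (sub_nonneg.2 h)

theorem monotone_sub_map (hle : ∀ z, 0 ≤ z → P z ≤ z) : Monotone fun z => z - P z :=
  fun z w h => sub_nonneg.1 <| by
    rw [sub_sub_sub_comm, ← map_sub]
    exact sub_nonneg.2 (hle _ (sub_nonneg.2 h))

end OrderedGroup

section LatticeOrderedGroup

variable {E : Type*} [AddCommGroup E] [Lattice E] [AddLeftMono E]

theorem abs_sub_eq_add_of_inf_eq_zero {a b : E} (h : a ⊓ b = 0) : |a - b| = a + b := by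
  rw [← sup_sub_inf_eq_abs_sub b a, inf_comm, h, sub_zero, sup_comm, ← inf_add_sup a b, h,
    zero_add]

variable {F : Type*} [FunLike F E E] [AddMonoidHomClass F E E] {P : F}

theorem map_inf_sub_map_eq_zero (hidem : ∀ z, P (P z) = P z)
    (hband : ∀ z, 0 ≤ z → 0 ≤ P z ∧ P z ≤ z) {z w : E} (hz : 0 ≤ z) (hw : 0 ≤ w) :
    P z ⊓ (w - P w) = 0 := by
  set d := P z ⊓ (w - P w)
  have hd : 0 ≤ d := le_inf (hband z hz).1 (sub_nonneg.2 (hband w hw).2)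
  have hPd : P d ≤ 0 := by
    simpa [map_sub, hidem] using monotone_of_map_nonneg (fun z hz => (hband z hz).1)
      (inf_le_right : d ≤ w - P w)
  have hQd : d - P d ≤ 0 := by
    simpa [hidem] using monotone_sub_map (fun z hz => (hband z hz).2) (inf_le_left : d ≤ P z)
  exact le_antisymm (by simpa using add_nonpos hQd hPd) hd

theorem abs_map_eq_map_abs (hband : ∀ z, 0 ≤ z → 0 ≤ P z ∧ P z ≤ z) (z : E) :
    |P z| = P |z| := by
  have hdisj : P z⁺ ⊓ P z⁻ = 0 := by
    refine le_antisymm ?_ (le_inf (hband _ (posPart_nonneg z)).1 (hband _ (negPart_nonneg z)).1)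
    calc P z⁺ ⊓ P z⁻ ≤ z⁺ ⊓ z⁻ :=
          inf_le_inf (hband _ (posPart_nonneg z)).2 (hband _ (negPart_nonneg z)).2
      _ = 0 := posPart_inf_negPart_eq_zero z
  calc |P z| = |P z⁺ - P z⁻| := by rw [← map_sub, posPart_sub_negPart]
    _ = P z⁺ + P z⁻ := abs_sub_eq_add_of_inf_eq_zero hdisj
    _ = P |z| := by rw [← map_add, posPart_add_negPart]

end LatticeOrderedGroup

theorem eq_zero_of_le_mul_of_inf_eq_zero {E : Type*} [Mul E] [Zero E] [Lattice E]
    (hfalg : ∀ a b c : E, a ⊓ b = 0 → 0 ≤ c → (a * c) ⊓ b = 0) {a b u : E} (hab : a ⊓ b = 0)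
    (hu : 0 ≤ u) (hb : b ≤ a * u) : b = 0 := by
  simpa [inf_eq_right.2 hb] using hfalg a b u hab hu

theorem map_mul_of_nonneg {E : Type*} [NonUnitalRing E] [Lattice E] [AddLeftMono E]
    {F : Type*} [FunLike F E E] [AddMonoidHomClass F E E] {P : F}
    (hmulpos : ∀ a b : E, 0 ≤ a → 0 ≤ b → 0 ≤ a * b)
    (hfalg : ∀ a b c : E, a ⊓ b = 0 → 0 ≤ c → (a * c) ⊓ b = 0) (hidem : ∀ z, P (P z) = P z)
    (hband : ∀ z, 0 ≤ z → 0 ≤ P z ∧ P z ≤ z) {v u : E} (hv : 0 ≤ v) (hu : 0 ≤ u) :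
    P (v * u) = P v * u := by
  have hkill : P ((v - P v) * u) = 0 := by
    have hnn : 0 ≤ (v - P v) * u := hmulpos _ _ (sub_nonneg.2 (hband v hv).2) hu
    refine eq_zero_of_le_mul_of_inf_eq_zero hfalg ?_ hu (hband _ hnn).2
    rw [inf_comm]
    exact map_inf_sub_map_eq_zero hidem hband hnn hv
  have hfix : P v * u - P (P v * u) = 0 := by
    have hnn : 0 ≤ P v * u := hmulpos _ _ (hband v hv).1 hu
    exact eq_zero_of_le_mul_of_inf_eq_zero hfalg (map_inf_sub_map_eq_zero hidem hband hv hnn) hu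
      (sub_le_self _ (hband _ hnn).1)
  calc P (v * u) = P (P v * u + (v - P v) * u) := by rw [← add_mul, add_sub_cancel]
    _ = P v * u := by rw [map_add, hkill, add_zero, ← sub_eq_zero.1 hfix]

theorem norm_map_le_of_isSolid {E : Type*} [NormedAddCommGroup E] [Lattice E] [AddLeftMono E]
    {F : Type*} [FunLike F E E] [AddMonoidHomClass F E E] {P : F}
    (hsolid : ∀ a b : E, |a| ≤ |b| → ‖a‖ ≤ ‖b‖) (hband : ∀ z, 0 ≤ z → 0 ≤ P z ∧ P z ≤ z)
    (z : E) : ‖P z‖ ≤ ‖z‖ :=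
  hsolid _ _ <| by rw [abs_map_eq_map_abs hband]; exact (hband _ (abs_nonneg z)).2

theorem MWTendsto.map_bandProjection {E : Type*} [NonUnitalNormedCommRing E] [Lattice E]
    [AddLeftMono E] [NormedSpace ℝ E] (hsolid : ∀ a b : E, |a| ≤ |b| → ‖a‖ ≤ ‖b‖)
    (hmulpos : ∀ a b : E, 0 ≤ a → 0 ≤ b → 0 ≤ a * b)
    (hfalg : ∀ a b c : E, a ⊓ b = 0 → 0 ≤ c → (a * c) ⊓ b = 0)
    {P : E →ₗ[ℝ] E} (hidem : ∀ z, P (P z) = P z) (hband : ∀ z, 0 ≤ z → 0 ≤ P z ∧ P z ≤ z)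
    {ι : Type*} {l : Filter ι} {x : ι → E} {a : E} (hx : MWTendsto l x a) :
    MWTendsto l (fun i => P (x i)) (P a) := by
  intro u hu f
  let Pc : E →L[ℝ] E := P.mkContinuous 1 fun z => by
    simpa using norm_map_le_of_isSolid hsolid hband z
  have hcomm : ∀ i, |P (x i) - P a| * u = Pc (|x i - a| * u) := fun i => by
    rw [P.mkContinuous_apply, map_mul_of_nonneg hmulpos hfalg hidem hband (abs_nonneg _) hu,
      ← abs_map_eq_map_abs hband, map_sub]
  simp only [hcomm]
  exact hx u hu (f.comp Pc)

theorem mw_band_projection_general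
    {E : Type*} [NonUnitalNormedCommRing E] [Lattice E]
    [CovariantClass E E (· + ·) (· ≤ ·)] [NormedSpace ℝ E]
    (hsolid : ∀ a b : E, |a| ≤ |b| → ‖a‖ ≤ ‖b‖)
    (hmulpos : ∀ a b : E, 0 ≤ a → 0 ≤ b → 0 ≤ a * b)
    (hfalg : ∀ a b c : E, a ⊓ b = 0 → 0 ≤ c → (a * c) ⊓ b = 0)
    (P : E →ₗ[ℝ] E) (hidem : ∀ z : E, P (P z) = P z)
    (hband : ∀ z : E, 0 ≤ z → 0 ≤ P z ∧ P z ≤ z)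
    {A : Type*} [SemilatticeSup A]
    (x : A → E) (a : E) (hx : MWTendsto atTop x a) :
    MWTendsto atTop (fun α => P (x α)) (P a) :=
  hx.map_bandProjection hsolid hmulpos hfalg hidem hband

/-- Band projections preserve `mw`-convergence. -/
theorem mw_band_projection
    {E : Type*} [NonUnitalNormedCommRing E] [Lattice E]
    [CovariantClass E E (· + ·) (· ≤ ·)] [NormedSpace ℝ E] [CompleteSpace E]
    (hsolid : ∀ a b : E, |a| ≤ |b| → ‖a‖ ≤ ‖b‖)
    (hmulpos : ∀ a b : E, 0 ≤ a → 0 ≤ b → 0 ≤ a * b)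
    (hfalg : ∀ a b c : E, a ⊓ b = 0 → 0 ≤ c → (a * c) ⊓ b = 0)
    (P : E →ₗ[ℝ] E) (hidem : ∀ z : E, P (P z) = P z)
    (hband : ∀ z : E, 0 ≤ z → 0 ≤ P z ∧ P z ≤ z)
    {A : Type*} [Nonempty A] [SemilatticeSup A]
    (x : A → E) (a : E) (hx : MWTendsto atTop x a) :
    MWTendsto atTop (fun α => P (x α)) (P a) :=
  mw_band_projection_general hsolid hmulpos hfalg P hidem hband x a hx
end

section
/- Let E be a Banach f-algebra and (x_α)_{α∈A}, (y_β)_{β∈B} nets in E. If x_α →mw x and y_β →mw y, then the net (x_α ⊔ y_β)_{(α,β)∈A×B} is mw-convergent to x ⊔ y. The analogous statements hold for ⊓ and for absolute values. -/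
open Filter Topology

section Aux

variable {E : Type*} [NonUnitalNormedCommRing E] [Lattice E]
    [CovariantClass E E (· + ·) (· ≤ ·)] [NormedSpace ℝ E]

/-- Riesz–Kantorovich: every continuous linear functional on a normed lattice with solid norm
is dominated on the positive cone by a positive continuous linear functional. -/
theorem aux_exists_dominating (hsolid : ∀ a b : E, |a| ≤ |b| → ‖a‖ ≤ ‖b‖)
    (f : E →L[ℝ] ℝ) : ∃ g : E →L[ℝ] ℝ, ∀ v : E, 0 ≤ v → |f v| ≤ g v := by
  -- For each functional φ, build the additive, continuous "positive part" p with φ ≤ p on E⁺.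
  have key : ∀ φ : E →L[ℝ] ℝ, ∃ p : E →+ ℝ, Continuous p ∧
      ∀ v : E, 0 ≤ v → φ v ≤ p v ∧ 0 ≤ p v := by
    intro φ
    set S : E → Set ℝ := fun u => φ '' {v | 0 ≤ v ∧ v ≤ u} with hS
    set q : E → ℝ := fun u => sSup (S u) with hqdef
    have hmem : ∀ u : E, 0 ≤ u → (0 : ℝ) ∈ S u := by
      intro u hu
      exact ⟨0, ⟨le_rfl, hu⟩, map_zero φ⟩
    have hne : ∀ u : E, 0 ≤ u → (S u).Nonempty := fun u hu => ⟨0, hmem u hu⟩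
    have hbdd : ∀ u : E, 0 ≤ u → ∀ r ∈ S u, r ≤ ‖φ‖ * ‖u‖ := by
      rintro u hu r ⟨v, ⟨hv0, hvu⟩, rfl⟩
      have h1 : ‖v‖ ≤ ‖u‖ := by
        apply hsolid
        rw [abs_of_nonneg hv0, abs_of_nonneg hu]
        exact hvu
      calc φ v ≤ |φ v| := le_abs_self _
        _ ≤ ‖φ‖ * ‖v‖ := φ.le_opNorm v
        _ ≤ ‖φ‖ * ‖u‖ := by
            exact mul_le_mul_of_nonneg_left h1 (norm_nonneg φ)
    have hBdd : ∀ u : E, 0 ≤ u → BddAbove (S u) := fun u hu => ⟨‖φ‖ * ‖u‖, hbdd u hu⟩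
    have hq0 : ∀ u : E, 0 ≤ u → 0 ≤ q u := fun u hu => le_csSup (hBdd u hu) (hmem u hu)
    have hqnorm : ∀ u : E, 0 ≤ u → q u ≤ ‖φ‖ * ‖u‖ := fun u hu =>
      csSup_le (hne u hu) (hbdd u hu)
    have hφq : ∀ u : E, 0 ≤ u → φ u ≤ q u := fun u hu =>
      le_csSup (hBdd u hu) ⟨u, ⟨hu, le_rfl⟩, rfl⟩
    -- additivity of q on the positive cone, via the Riesz decomposition property
    have hadd : ∀ u w : E, 0 ≤ u → 0 ≤ w → q (u + w) = q u + q w := by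
      intro u w hu hw
      have huw : (0 : E) ≤ u + w := add_nonneg hu hw
      apply le_antisymm
      · apply csSup_le (hne _ huw)
        rintro r ⟨v, ⟨hv0, hvuw⟩, rfl⟩
        set v₁ : E := v ⊓ u with hv₁
        set v₂ : E := v - v₁ with hv₂
        have h10 : 0 ≤ v₁ := le_inf hv0 hu
        have h1u : v₁ ≤ u := inf_le_right
        have h20 : 0 ≤ v₂ := sub_nonneg.2 inf_le_left
        have h2w : v₂ ≤ w := by
          have hthis : v - v ⊓ u = (v - v) ⊔ (v - u) := sub_inf v u v
          rw [hv₂, hv₁, hthis, sub_self]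
          exact sup_le hw (sub_le_iff_le_add'.2 hvuw)
        have hsplit : φ v = φ v₁ + φ v₂ := by
          rw [hv₂, map_sub]; ring
        rw [hsplit]
        exact add_le_add (le_csSup (hBdd u hu) ⟨v₁, ⟨h10, h1u⟩, rfl⟩)
          (le_csSup (hBdd w hw) ⟨v₂, ⟨h20, h2w⟩, rfl⟩)
      · rw [← sub_nonneg]
        have h1 : q u ≤ q (u + w) - q w := by
          apply csSup_le (hne u hu)
          rintro r ⟨v₁, ⟨h10, h1u⟩, rfl⟩
          rw [le_sub_iff_add_le]
          have h2 : q w ≤ q (u + w) - φ v₁ := by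
            apply csSup_le (hne w hw)
            rintro s ⟨v₂, ⟨h20, h2w⟩, rfl⟩
            rw [le_sub_iff_add_le, add_comm]
            exact le_csSup (hBdd _ huw)
              ⟨v₁ + v₂, ⟨add_nonneg h10 h20, add_le_add h1u h2w⟩, map_add φ v₁ v₂⟩
          linarith
        linarith
    have hq0' : q 0 = 0 := by
      apply le_antisymm _ (hq0 0 le_rfl)
      apply csSup_le (hne 0 le_rfl)
      rintro r ⟨v, ⟨hv0, hv0'⟩, rfl⟩
      rw [le_antisymm hv0' hv0, map_zero]
    -- the positive-part functional
    have hmapadd : ∀ x y : E, q ((x + y)⁺) - q ((x + y)⁻) =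
        (q x⁺ - q x⁻) + (q y⁺ - q y⁻) := by
      intro x y
      have e : ((x + y)⁺ + x⁻ + y⁻) - ((x + y)⁻ + x⁺ + y⁺) = 0 := by
        have h1 := posPart_sub_negPart (x + y)
        have h2 := posPart_sub_negPart x
        have h3 := posPart_sub_negPart y
        calc ((x + y)⁺ + x⁻ + y⁻) - ((x + y)⁻ + x⁺ + y⁺)
            = ((x + y)⁺ - (x + y)⁻) - (x⁺ - x⁻) - (y⁺ - y⁻) := by abel
          _ = (x + y) - x - y := by rw [h1, h2, h3]
          _ = 0 := by abel
      have ekey : (x + y)⁺ + x⁻ + y⁻ = (x + y)⁻ + x⁺ + y⁺ := sub_eq_zero.1 e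
      have l1 : q ((x + y)⁺ + x⁻ + y⁻) = q ((x + y)⁺) + q (x⁻) + q (y⁻) := by
        rw [hadd _ _ (add_nonneg (posPart_nonneg _) (negPart_nonneg _)) (negPart_nonneg _),
          hadd _ _ (posPart_nonneg _) (negPart_nonneg _)]
      have l2 : q ((x + y)⁻ + x⁺ + y⁺) = q ((x + y)⁻) + q (x⁺) + q (y⁺) := by
        rw [hadd _ _ (add_nonneg (negPart_nonneg _) (posPart_nonneg _)) (posPart_nonneg _),
          hadd _ _ (negPart_nonneg _) (posPart_nonneg _)]
      have : q ((x + y)⁺) + q (x⁻) + q (y⁻) = q ((x + y)⁻) + q (x⁺) + q (y⁺) := by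
        rw [← l1, ← l2, ekey]
      linarith
    set p : E →+ ℝ := AddMonoidHom.mk' (fun x => q (x⁺) - q (x⁻)) (fun x y => by
      simpa using hmapadd x y) with hp
    have hpbound : ∀ z : E, ‖p z‖ ≤ (‖φ‖ + ‖φ‖) * ‖z‖ := by
      intro z
      have hz1 : ‖z⁺‖ ≤ ‖z‖ := by
        apply hsolid
        rw [abs_of_nonneg (posPart_nonneg z), posPart_def]
        exact sup_le (le_abs_self z) (abs_nonneg z)
      have hz2 : ‖z⁻‖ ≤ ‖z‖ := by
        apply hsolid
        rw [abs_of_nonneg (negPart_nonneg z), negPart_def]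
        exact sup_le (neg_le_abs z) (abs_nonneg z)
      have b1 := hqnorm _ (posPart_nonneg z)
      have b2 := hqnorm _ (negPart_nonneg z)
      have c1 := hq0 _ (posPart_nonneg z)
      have c2 := hq0 _ (negPart_nonneg z)
      have d1 : q (z⁺) ≤ ‖φ‖ * ‖z‖ :=
        b1.trans (mul_le_mul_of_nonneg_left hz1 (norm_nonneg φ))
      have d2 : q (z⁻) ≤ ‖φ‖ * ‖z‖ :=
        b2.trans (mul_le_mul_of_nonneg_left hz2 (norm_nonneg φ))
      have : |q (z⁺) - q (z⁻)| ≤ (‖φ‖ + ‖φ‖) * ‖z‖ := by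
        rw [abs_le]
        constructor <;> nlinarith
      simpa [hp, Real.norm_eq_abs] using this
    have hpcont : Continuous p :=
      (AddMonoidHomClass.lipschitz_of_bound p (‖φ‖ + ‖φ‖) hpbound).continuous
    refine ⟨p, hpcont, fun v hv => ?_⟩
    have hv1 : v⁺ = v := posPart_eq_self.2 hv
    have hv2 : v⁻ = 0 := negPart_eq_zero.2 hv
    have hpv : p v = q v := by simp [hp, hv1, hv2, hq0']
    exact ⟨by rw [hpv]; exact hφq v hv, by rw [hpv]; exact hq0 v hv⟩
  obtain ⟨p₁, hc₁, hp₁⟩ := key f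
  obtain ⟨p₂, hc₂, hp₂⟩ := key (-f)
  refine ⟨(p₁ + p₂).toRealLinearMap (by exact hc₁.add hc₂), fun v hv => ?_⟩
  have h1 := hp₁ v hv
  have h2 := hp₂ v hv
  have h2' : -(f v) ≤ p₂ v := by simpa using h2.1
  have : |f v| ≤ p₁ v + p₂ v := by
    rw [abs_le]
    constructor <;> [linarith [h1.1, h1.2, h2.2]; linarith [h1.1, h1.2, h2.2]]
  simpa using this

/-- Weak-convergence squeeze between `0` and a weakly null net. -/
theorem aux_squeeze (hsolid : ∀ a b : E, |a| ≤ |b| → ‖a‖ ≤ ‖b‖)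
    {ι : Type*} {l : Filter ι} (z w : ι → E) (hz : ∀ i, 0 ≤ z i) (hzw : ∀ i, z i ≤ w i)
    (hw : ∀ g : E →L[ℝ] ℝ, Tendsto (fun i => g (w i)) l (𝓝 0)) (f : E →L[ℝ] ℝ) :
    Tendsto (fun i => f (z i)) l (𝓝 0) := by
  obtain ⟨g, hg⟩ := aux_exists_dominating hsolid f
  have hgpos : ∀ v : E, 0 ≤ v → 0 ≤ g v := fun v hv => (abs_nonneg _).trans (hg v hv)
  refine squeeze_zero_norm (fun i => ?_) (hw g)
  have h1 : |f (z i)| ≤ g (z i) := hg _ (hz i)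
  have h2 : g (z i) ≤ g (w i) := by
    have h3 := hgpos _ (sub_nonneg.2 (hzw i))
    rw [map_sub] at h3
    linarith
  calc ‖f (z i)‖ = |f (z i)| := Real.norm_eq_abs _
    _ ≤ g (w i) := h1.trans h2

end Aux

/-- The lattice operations are `mw`-continuous: if `x_α →mw x` and `y_β →mw y` then
`x_α ⊔ y_β →mw x ⊔ y`, `x_α ⊓ y_β →mw x ⊓ y` and `|x_α| →mw |x|`. -/
theorem mw_lattice_operations
    {E : Type*} [NonUnitalNormedCommRing E] [Lattice E]
    [CovariantClass E E (· + ·) (· ≤ ·)] [NormedSpace ℝ E] [CompleteSpace E]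
    (hsolid : ∀ a b : E, |a| ≤ |b| → ‖a‖ ≤ ‖b‖)
    (hmulpos : ∀ a b : E, 0 ≤ a → 0 ≤ b → 0 ≤ a * b)
    (hfalg : ∀ a b c : E, a ⊓ b = 0 → 0 ≤ c → (a * c) ⊓ b = 0)
    {A : Type*} [Nonempty A] [SemilatticeSup A]
    {B : Type*} [Nonempty B] [SemilatticeSup B]
    (x : A → E) (y : B → E) (a b : E)
    (hx : MWTendsto atTop x a) (hy : MWTendsto atTop y b) :
    MWTendsto atTop (fun p : A × B => x p.1 ⊔ y p.2) (a ⊔ b) ∧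
    MWTendsto atTop (fun p : A × B => x p.1 ⊓ y p.2) (a ⊓ b) ∧
    MWTendsto atTop (fun α => |x α|) |a| := by
  -- multiplication by a nonnegative element is monotone
  have hmono : ∀ c d u : E, c ≤ d → 0 ≤ u → c * u ≤ d * u := by
    intro c d u hcd hu
    have h := hmulpos (d - c) u (sub_nonneg.2 hcd) hu
    rw [sub_mul] at h
    exact sub_nonneg.1 h
  -- convergence of the dominating net along the product filter
  have hdom : ∀ u : E, 0 ≤ u → ∀ g : E →L[ℝ] ℝ,
      Tendsto (fun p : A × B => g (|x p.1 - a| * u + |y p.2 - b| * u)) atTop (𝓝 0) := by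
    intro u hu g
    rw [← prod_atTop_atTop_eq]
    have h1 : Tendsto (fun p : A × B => g (|x p.1 - a| * u)) (atTop ×ˢ atTop) (𝓝 0) :=
      (hx u hu g).comp tendsto_fst
    have h2 : Tendsto (fun p : A × B => g (|y p.2 - b| * u)) (atTop ×ˢ atTop) (𝓝 0) :=
      (hy u hu g).comp tendsto_snd
    simpa [map_add] using h1.add h2
  refine ⟨?_, ?_, ?_⟩
  · -- sup
    intro u hu f
    refine aux_squeeze hsolid _ (fun p : A × B => |x p.1 - a| * u + |y p.2 - b| * u)
      (fun p => hmulpos _ _ (abs_nonneg _) hu) (fun p => ?_) (hdom u hu) f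
    show |x p.1 ⊔ y p.2 - (a ⊔ b)| * u ≤ |x p.1 - a| * u + |y p.2 - b| * u
    rw [← add_mul]
    refine hmono _ _ _ ?_ hu
    calc |x p.1 ⊔ y p.2 - (a ⊔ b)|
        ≤ |x p.1 ⊔ y p.2 - (a ⊔ y p.2)| + |a ⊔ y p.2 - (a ⊔ b)| := by
          have h := abs_add_le (x p.1 ⊔ y p.2 - (a ⊔ y p.2)) (a ⊔ y p.2 - (a ⊔ b))
          simpa [sub_add_sub_cancel] using h
      _ ≤ |x p.1 - a| + |y p.2 - b| := by
          refine add_le_add (abs_sup_sub_sup_le_abs _ _ _) ?_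
          rw [sup_comm a (y p.2), sup_comm a b]
          exact abs_sup_sub_sup_le_abs _ _ _
  · -- inf
    intro u hu f
    refine aux_squeeze hsolid _ (fun p : A × B => |x p.1 - a| * u + |y p.2 - b| * u)
      (fun p => hmulpos _ _ (abs_nonneg _) hu) (fun p => ?_) (hdom u hu) f
    show |x p.1 ⊓ y p.2 - (a ⊓ b)| * u ≤ |x p.1 - a| * u + |y p.2 - b| * u
    rw [← add_mul]
    refine hmono _ _ _ ?_ hu
    calc |x p.1 ⊓ y p.2 - (a ⊓ b)|
        ≤ |x p.1 ⊓ y p.2 - (a ⊓ y p.2)| + |a ⊓ y p.2 - (a ⊓ b)| := by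
          have h := abs_add_le (x p.1 ⊓ y p.2 - (a ⊓ y p.2)) (a ⊓ y p.2 - (a ⊓ b))
          simpa [sub_add_sub_cancel] using h
      _ ≤ |x p.1 - a| + |y p.2 - b| := by
          refine add_le_add (abs_inf_sub_inf_le_abs _ _ _) ?_
          rw [inf_comm a (y p.2), inf_comm a b]
          exact abs_inf_sub_inf_le_abs _ _ _
  · -- abs
    intro u hu f
    refine aux_squeeze hsolid _ (fun α : A => |x α - a| * u)
      (fun α => hmulpos _ _ (abs_nonneg _) hu) (fun α => ?_) (fun g => hx u hu g) f
    show |(|x α| - |a|)| * u ≤ |x α - a| * u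
    exact hmono _ _ _ (abs_abs_sub_abs_le _ _) hu
end

section
/- Let E be a Banach f-algebra with order continuous norm whose multiplication has a unit element e, and let (x_n) be a decreasing (antitone) sequence in E. Then x_n →mw 0 if and only if for every u ≥ 0 the sequence |x_n|*(u ⊓ (n:ℝ)•e) converges weakly to 0. -/
/-!
Split `u = u ⊓ n • e + (u - n • e)⁺`. The unit `e` is positive and a weak order unit, so
`(u - n • e)⁺` decreases to `0` and is norm-null by order continuity. Testing either condition
with `u = e` shows that `|x n|` is weakly null, hence norm bounded by the uniform boundedness
principle; so `|x n| * (u - n • e)⁺` is norm-null and the two conditions are equivalent.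
-/

open Filter Topology

section UniformBoundedness

variable {𝕜 E : Type*} [RCLike 𝕜] [NormedAddCommGroup E] [NormedSpace 𝕜 E]

theorem exists_norm_le_of_forall_exists_dual_le {ι : Type*} {y : ι → E}
    (h : ∀ f : StrongDual 𝕜 E, ∃ C, ∀ i, ‖f (y i)‖ ≤ C) : ∃ C, ∀ i, ‖y i‖ ≤ C := by
  obtain ⟨C, hC⟩ := banach_steinhaus (g := fun i => NormedSpace.inclusionInDoubleDualLi 𝕜 (y i)) h
  exact ⟨C, fun i => (NormedSpace.inclusionInDoubleDualLi 𝕜).norm_map (y i) ▸ hC i⟩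

theorem isBoundedUnder_norm_of_weakly_tendsto_zero {y : ℕ → E}
    (h : ∀ f : StrongDual 𝕜 E, Tendsto (fun n => f (y n)) atTop (𝓝 0)) :
    IsBoundedUnder (· ≤ ·) atTop (‖y ·‖) := by
  refine isBoundedUnder_of (exists_norm_le_of_forall_exists_dual_le (𝕜 := 𝕜) fun f => ?_)
  obtain ⟨C, hC⟩ := (h f).norm.bddAbove_range
  exact ⟨C, fun n => hC ⟨n, rfl⟩⟩

theorem tendsto_dual_mul_of_weakly_tendsto_zero {R : Type*} [NonUnitalNormedRing R]
    [NormedSpace 𝕜 R] {a r : ℕ → R}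
    (ha : ∀ f : StrongDual 𝕜 R, Tendsto (fun n => f (a n)) atTop (𝓝 0))
    (hr : Tendsto r atTop (𝓝 0)) (f : StrongDual 𝕜 R) :
    Tendsto (fun n => f (a n * r n)) atTop (𝓝 0) :=
  (f.continuous.tendsto' 0 0 (map_zero f)).comp <|
    isBoundedUnder_le_mul_tendsto_zero (isBoundedUnder_norm_of_weakly_tendsto_zero ha) hr

end UniformBoundedness

section FAlgebra

variable {E : Type*} [NonUnitalCommRing E] [Lattice E]

theorem mul_eq_zero_of_inf_eq_zero (hfalg : ∀ a b c : E, a ⊓ b = 0 → 0 ≤ c → (a * c) ⊓ b = 0)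
    {a b : E} (ha : 0 ≤ a) (hab : a ⊓ b = 0) : a * b = 0 := by
  have hb : 0 ≤ b := hab ▸ inf_le_right
  have h : (b * a) ⊓ (a * b) = 0 :=
    hfalg b (a * b) a (by rw [inf_comm]; exact hfalg a b b hab hb) ha
  rwa [mul_comm, inf_idem] at h

theorem eq_zero_of_inf_unit_eq_zero (hfalg : ∀ a b c : E, a ⊓ b = 0 → 0 ≤ c → (a * c) ⊓ b = 0)
    {e : E} (hunit : ∀ z : E, e * z = z) {v : E} (hv : 0 ≤ v) (hve : v ⊓ e = 0) : v = 0 := by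
  have h := hfalg e v v (by rwa [inf_comm]) hv
  rwa [hunit, inf_idem] at h

variable [AddLeftMono E]

theorem unit_nonneg (hmulpos : ∀ a b : E, 0 ≤ a → 0 ≤ b → 0 ≤ a * b)
    (hfalg : ∀ a b c : E, a ⊓ b = 0 → 0 ≤ c → (a * c) ⊓ b = 0)
    {e : E} (hunit : ∀ z : E, e * z = z) : 0 ≤ e := by
  have hdisj : e⁺ * e⁻ = 0 :=
    mul_eq_zero_of_inf_eq_zero hfalg (posPart_nonneg e) (posPart_inf_negPart_eq_zero e)
  -- `e⁻ = e * e⁻ = (e⁺ - e⁻) * e⁻`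
  have hneg : e⁺ * e⁻ - e⁻ * e⁻ = e⁻ := by rw [← sub_mul, posPart_sub_negPart, hunit]
  have : e⁻ ≤ 0 := by
    rw [← hneg, hdisj, zero_sub, neg_nonpos]
    exact hmulpos _ _ (negPart_nonneg e) (negPart_nonneg e)
  exact negPart_eq_zero.mp (le_antisymm this (negPart_nonneg e))

end FAlgebra

section LatticeOrderedGroup

variable {E : Type*} [AddCommGroup E] [Lattice E] [AddLeftMono E]

theorem inf_add_posPart_sub (a b : E) : a ⊓ b + (a - b)⁺ = a := by
  rw [← eq_sub_iff_add_eq, posPart_def, sub_sup, sub_sub_cancel, sub_zero, inf_comm]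

theorem antitone_posPart_sub_nsmul {e : E} (he : 0 ≤ e) (u : E) :
    Antitone fun n : ℕ => (u - n • e)⁺ :=
  fun _ _ hnm => posPart_mono (sub_le_sub_left (nsmul_le_nsmul_left he hnm) u)

theorem nsmul_inf_le_of_le_posPart_sub_nsmul {u v e : E} (hu : 0 ≤ u)
    (hv : ∀ n : ℕ, v ≤ (u - n • e)⁺) (k : ℕ) : k • (v ⊓ e) ≤ u := by
  induction k with
  | zero => simpa using hu
  | succ k ih =>
    have : k • (v ⊓ e) ≤ u - v ⊓ e :=
      calc k • (v ⊓ e) ≤ u ⊓ k • e := le_inf ih (nsmul_le_nsmul_right inf_le_right k)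
        _ = u - (u - k • e)⁺ := eq_sub_of_add_eq (inf_add_posPart_sub u _)
        _ ≤ u - v ⊓ e := sub_le_sub_left (inf_le_left.trans (hv k)) u
    rw [succ_nsmul]
    exact le_sub_iff_add_le.mp this

end LatticeOrderedGroup

section NormedLattice

variable {E : Type*} [NormedAddCommGroup E] [NormedSpace ℝ E] [Lattice E] [HasSolidNorm E]
  [AddLeftMono E]

theorem eq_zero_of_forall_nsmul_le {w u : E} (hw : 0 ≤ w) (h : ∀ k : ℕ, k • w ≤ u) : w = 0 := by
  by_contra hne
  have hpos : 0 < ‖w‖ := norm_pos_iff.mpr hne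
  obtain ⟨k, hk⟩ := exists_nat_gt (‖u‖ / ‖w‖)
  have : ‖k • w‖ ≤ ‖u‖ := norm_le_norm_of_abs_le_abs <| by
    rw [abs_of_nonneg (nsmul_nonneg hw k)]
    exact (h k).trans (le_abs_self u)
  rw [RCLike.norm_nsmul ℝ, nsmul_eq_mul] at this
  linarith [(div_lt_iff₀ hpos).mp hk]

theorem isGLB_range_posPart_sub_nsmul {e u : E} (he : 0 ≤ e) (hu : 0 ≤ u)
    (hweak : ∀ v : E, 0 ≤ v → v ⊓ e = 0 → v = 0) :
    IsGLB (Set.range fun n : ℕ => (u - n • e)⁺) 0 := by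
  refine ⟨Set.forall_mem_range.mpr fun n => posPart_nonneg _, fun b hb => ?_⟩
  have hle : ∀ n : ℕ, b⁺ ≤ (u - n • e)⁺ := fun n =>
    (posPart_mono (hb ⟨n, rfl⟩)).trans_eq (posPart_eq_self.mpr (posPart_nonneg _))
  have hinf : b⁺ ⊓ e = 0 :=
    eq_zero_of_forall_nsmul_le (le_inf (posPart_nonneg b) he)
      (nsmul_inf_le_of_le_posPart_sub_nsmul hu hle)
  exact (le_posPart b).trans (hweak _ (posPart_nonneg b) hinf).le

end NormedLattice

theorem tendsto_norm_of_antitone_of_isGLB_zero {E : Type*} [Norm E] [Preorder E] [Zero E]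
    (hoc : ∀ {B : Type*} [Nonempty B] [SemilatticeSup B] (y : B → E),
      Antitone y → IsGLB (Set.range y) 0 → Tendsto (fun β => ‖y β‖) atTop (𝓝 0))
    {y : ℕ → E} (hy : Antitone y) (hglb : IsGLB (Set.range y) 0) :
    Tendsto (‖y ·‖) atTop (𝓝 0) := by
  -- `hoc` only speaks about index types of one fixed universe
  have h := hoc (y ∘ ULift.down) (fun _ _ h => hy h)
    (by rwa [ULift.down_surjective.range_comp])
  exact h.comp (tendsto_atTop_atTop_of_monotone (fun _ _ h => h) fun n => ⟨n.down, le_rfl⟩)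

theorem mw_iff_truncation_general
    {E : Type*} [NonUnitalNormedCommRing E] [Lattice E]
    [CovariantClass E E (· + ·) (· ≤ ·)] [NormedSpace ℝ E]
    (hsolid : ∀ a b : E, |a| ≤ |b| → ‖a‖ ≤ ‖b‖)
    (hmulpos : ∀ a b : E, 0 ≤ a → 0 ≤ b → 0 ≤ a * b)
    (hfalg : ∀ a b c : E, a ⊓ b = 0 → 0 ≤ c → (a * c) ⊓ b = 0)
    (hoc : ∀ {B : Type*} [Nonempty B] [SemilatticeSup B] (y : B → E),
      Antitone y → IsGLB (Set.range y) 0 → Tendsto (fun β => ‖y β‖) atTop (𝓝 0))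
    (e : E) (hunit : ∀ z : E, e * z = z)
    (x : ℕ → E) :
    MWTendsto atTop x (0 : E) ↔
      ∀ u : E, 0 ≤ u → ∀ f : E →L[ℝ] ℝ,
        Tendsto (fun n : ℕ => f (|x n| * (u ⊓ (n : ℝ) • e))) atTop (𝓝 0) := by
  have : HasSolidNorm E := ⟨hsolid⟩
  have he : 0 ≤ e := unit_nonneg hmulpos hfalg hunit
  have hsplit (u : E) (n : ℕ) :
      |x n| * u = |x n| * (u ⊓ (n : ℝ) • e) + |x n| * (u - (n : ℝ) • e)⁺ := by
    rw [← mul_add, inf_add_posPart_sub]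
  have hrem (hx : ∀ f : E →L[ℝ] ℝ, Tendsto (fun n => f |x n|) atTop (𝓝 0)) (u : E) (hu : 0 ≤ u)
      (f : E →L[ℝ] ℝ) : Tendsto (fun n : ℕ => f (|x n| * (u - (n : ℝ) • e)⁺)) atTop (𝓝 0) := by
    simp only [Nat.cast_smul_eq_nsmul]
    refine tendsto_dual_mul_of_weakly_tendsto_zero hx (tendsto_zero_iff_norm_tendsto_zero.mpr ?_) f
    exact tendsto_norm_of_antitone_of_isGLB_zero hoc (antitone_posPart_sub_nsmul he u)
      (isGLB_range_posPart_sub_nsmul he hu fun _ => eq_zero_of_inf_unit_eq_zero hfalg hunit)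
  simp only [MWTendsto, sub_zero]
  constructor
  · intro h
    have hx : ∀ f : E →L[ℝ] ℝ, Tendsto (fun n => f |x n|) atTop (𝓝 0) := fun f => by
      simpa [mul_comm _ e, hunit] using h e he f
    intro u hu f
    simpa [hsplit u] using (h u hu f).sub (hrem hx u hu f)
  · intro h
    have hx : ∀ f : E →L[ℝ] ℝ, Tendsto (fun n => f |x n|) atTop (𝓝 0) := fun f => by
      refine (h e he f).congr' ?_
      filter_upwards [eventually_ne_atTop 0] with n hn
      rw [Nat.cast_smul_eq_nsmul, inf_eq_left.mpr (le_self_nsmul he hn), mul_comm, hunit]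
    intro u hu f
    simpa [hsplit u] using (h u hu f).add (hrem hx u hu f)

/-- In an order continuous Banach `f`-algebra with multiplicative unit `e`, a decreasing
sequence `(x_n)` satisfies `x_n →mw 0` iff `|x_n| * (u ⊓ n • e)` converges weakly to `0`
for all `u ≥ 0`. -/
theorem mw_iff_truncation
    {E : Type*} [NonUnitalNormedCommRing E] [Lattice E]
    [CovariantClass E E (· + ·) (· ≤ ·)] [NormedSpace ℝ E] [CompleteSpace E]
    (hsolid : ∀ a b : E, |a| ≤ |b| → ‖a‖ ≤ ‖b‖)
    (hmulpos : ∀ a b : E, 0 ≤ a → 0 ≤ b → 0 ≤ a * b)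
    (hfalg : ∀ a b c : E, a ⊓ b = 0 → 0 ≤ c → (a * c) ⊓ b = 0)
    (hoc : ∀ {B : Type*} [Nonempty B] [SemilatticeSup B] (y : B → E),
      Antitone y → IsGLB (Set.range y) 0 → Tendsto (fun β => ‖y β‖) atTop (𝓝 0))
    (e : E) (hunit : ∀ z : E, e * z = z)
    (x : ℕ → E) (hanti : Antitone x) :
    MWTendsto atTop x (0 : E) ↔
      ∀ u : E, 0 ≤ u → ∀ f : E →L[ℝ] ℝ,
        Tendsto (fun n : ℕ => f (|x n| * (u ⊓ (n : ℝ) • e))) atTop (𝓝 0) :=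
  mw_iff_truncation_general hsolid hmulpos hfalg hoc e hunit x
end

section
/- Let E be a Banach f-algebra with a quasi-interior point e, and let (x_α) be a net in E with 0 ≤ x_α for all α and (x_α) decreasing (antitone). Then x_α →mw 0 if and only if the net x_α * e converges weakly to 0. -/
open Filter Topology

section Helpers

variable {G : Type*} [AddCommGroup G] [Lattice G] [CovariantClass G G (· + ·) (· ≤ ·)]

lemma my_nsmul_nonneg {a : G} (h : 0 ≤ a) (n : ℕ) : 0 ≤ n • a := by
  induction n with
  | zero => simp
  | succ m ih => rw [succ_nsmul]; exact add_nonneg ih h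

lemma my_inf_add_le {x y z : G} (hx : 0 ≤ x) (hy : 0 ≤ y) (hz : 0 ≤ z) :
    x ⊓ (y + z) ≤ x ⊓ y + x ⊓ z := by
  have h1 : x ⊓ y + x ⊓ z = ((x + x) ⊓ (x + z)) ⊓ ((y + x) ⊓ (y + z)) := by
    rw [inf_add, add_inf, add_inf]
  rw [h1]
  refine le_inf (le_inf ?_ ?_) (le_inf ?_ ?_)
  · exact inf_le_left.trans (le_add_of_nonneg_right hx)
  · exact inf_le_left.trans (le_add_of_nonneg_right hz)
  · exact inf_le_left.trans (le_add_of_nonneg_left hy)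
  · exact inf_le_right

lemma my_inf_nsmul_eq_zero {x y : G} (hx : 0 ≤ x) (hy : 0 ≤ y) (hxy : x ⊓ y = 0) (n : ℕ) :
    x ⊓ n • y = 0 := by
  induction n with
  | zero => simpa using inf_eq_right.2 hx
  | succ m ih =>
      have hle : x ⊓ (m + 1) • y ≤ x ⊓ (m • y) + x ⊓ y := by
        rw [succ_nsmul]
        exact my_inf_add_le hx (my_nsmul_nonneg hy m) hy
      rw [ih, hxy, add_zero] at hle
      exact le_antisymm hle (le_inf hx (my_nsmul_nonneg hy (m + 1)))

lemma my_nonneg_of_nsmul_nonneg {a : G} {n : ℕ} (hn : 0 < n) (h : 0 ≤ n • a) : 0 ≤ a := by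
  have hdisj : a⁻ ⊓ n • a⁺ = 0 :=
    my_inf_nsmul_eq_zero (negPart_nonneg a) (posPart_nonneg a)
      ((inf_comm _ _).trans (posPart_inf_negPart_eq_zero a)) n
  have h1 : n • a⁻ ≤ n • a⁺ := by
    have h0 : (0 : G) ≤ n • a⁺ - n • a⁻ := by
      rwa [← smul_sub, posPart_sub_negPart]
    exact sub_nonneg.1 h0
  obtain ⟨m, rfl⟩ : ∃ m, n = m + 1 := ⟨n - 1, (Nat.succ_pred_eq_of_pos hn).symm⟩
  have h2 : a⁻ ≤ (m + 1) • a⁻ := by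
    rw [succ_nsmul]
    exact le_add_of_nonneg_left (my_nsmul_nonneg (negPart_nonneg a) m)
  have h3 : a⁻ = 0 := by
    have h4 := inf_eq_left.2 (h2.trans h1)
    rw [hdisj] at h4
    exact h4.symm
  rw [← negPart_eq_zero]
  exact h3

end Helpers

/-- In a Banach `f`-algebra with quasi-interior point `e`, a positive decreasing net
satisfies `x_α →mw 0` iff `x_α * e` converges weakly to `0`. -/
theorem mw_iff_quasiInterior
    {E : Type*} [NonUnitalNormedCommRing E] [Lattice E]
    [CovariantClass E E (· + ·) (· ≤ ·)] [NormedSpace ℝ E] [CompleteSpace E]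
    (hsolid : ∀ a b : E, |a| ≤ |b| → ‖a‖ ≤ ‖b‖)
    (hmulpos : ∀ a b : E, 0 ≤ a → 0 ≤ b → 0 ≤ a * b)
    (hfalg : ∀ a b c : E, a ⊓ b = 0 → 0 ≤ c → (a * c) ⊓ b = 0)
    (e : E) (he : 0 ≤ e)
    (hqi : ∀ z : E, 0 ≤ z → Tendsto (fun n : ℕ => ‖z - z ⊓ (n : ℝ) • e‖) atTop (𝓝 0))
    {A : Type*} [Nonempty A] [SemilatticeSup A]
    (x : A → E) (hpos : ∀ α : A, 0 ≤ x α) (hanti : Antitone x) :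
    MWTendsto atTop x (0 : E) ↔
      ∀ f : E →L[ℝ] ℝ, Tendsto (fun α => f (x α * e)) atTop (𝓝 0) := by
  haveI : IsOrderedAddMonoid E :=
    { add_le_add_left := fun a b h c => by
        have h' : c + a ≤ c + b := CovariantClass.elim c h
        rwa [add_comm c a, add_comm c b] at h' }
  haveI : HasSolidNorm E := ⟨fun a b h => hsolid a b h⟩
  -- real scalar positivity
  have hsmul : ∀ w : ℝ, 0 ≤ w → ∀ a : E, 0 ≤ a → 0 ≤ w • a := by
    intro w hw a ha
    have hq : ∀ q : ℚ, 0 ≤ q → 0 ≤ (q : ℝ) • a := by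
      intro q hq0
      refine my_nonneg_of_nsmul_nonneg (n := q.den) q.den_pos ?_
      have key : (q.den : ℕ) • ((q : ℝ) • a) = (q.num.toNat : ℕ) • a := by
        rw [← Nat.cast_smul_eq_nsmul ℝ (q.den), smul_smul,
          ← Nat.cast_smul_eq_nsmul ℝ (q.num.toNat)]
        congr 1
        have hnum : ((q.den : ℚ) * q) = (q.num : ℚ) := by
          rw [mul_comm, Rat.mul_den_eq_num]
        have hcast : ((q.den : ℝ) * (q : ℝ)) = ((q.num : ℤ) : ℝ) := by
          exact_mod_cast congrArg (fun r : ℚ => (r : ℝ)) hnum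
        rw [hcast]
        exact_mod_cast (Int.toNat_of_nonneg (Rat.num_nonneg.2 hq0)).symm
      rw [key]
      exact my_nsmul_nonneg ha _
    set S : Set ℝ := {w : ℝ | 0 ≤ w • a} with hS
    have hSclosed : IsClosed S := isClosed_nonneg.preimage (continuous_id.smul continuous_const)
    have hseq : ∀ m : ℕ, ∃ q : ℚ, w < (q : ℝ) ∧ (q : ℝ) < w + 1 / (m + 1) := by
      intro m
      exact exists_rat_btwn (lt_add_of_pos_right w (by positivity))
    choose q hq1 hq2 using hseq
    have htend : Tendsto (fun m : ℕ => ((q m : ℚ) : ℝ)) atTop (𝓝 w) := by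
      have h2 : Tendsto (fun m : ℕ => w + 1 / (m + 1 : ℝ)) atTop (𝓝 (w + 0)) :=
        tendsto_const_nhds.add tendsto_one_div_add_atTop_nhds_zero_nat
      rw [add_zero] at h2
      exact tendsto_of_tendsto_of_tendsto_of_le_of_le tendsto_const_nhds h2
        (fun m => (hq1 m).le) (fun m => (hq2 m).le)
    have hmem : ∀ m, ((q m : ℚ) : ℝ) ∈ S := by
      intro m
      have : (0 : ℚ) ≤ q m := by
        have := (hq1 m)
        exact_mod_cast le_of_lt (lt_of_le_of_lt hw this)
      exact hq (q m) this
    exact hSclosed.mem_of_tendsto htend (Eventually.of_forall hmem)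
  have hmulmono : ∀ a b c : E, 0 ≤ a → b ≤ c → a * b ≤ a * c := by
    intro a b c ha hbc
    have := hmulpos a (c - b) ha (sub_nonneg.2 hbc)
    rwa [mul_sub, sub_nonneg] at this
  set y : A → E := fun α => x α * e with hy
  have hy0 : ∀ α, 0 ≤ y α := fun α => hmulpos _ _ (hpos α) he
  have hyanti : Antitone y := by
    intro α β hab
    have h1 : x β ≤ x α := hanti hab
    have := hmulpos (x α - x β) e (sub_nonneg.2 h1) he
    rw [sub_mul, sub_nonneg] at this
    exact this
  constructor
  · intro h f
    have h1 := h e he f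
    have heq : (fun i => f (|x i - 0| * e)) = fun α => f (x α * e) := by
      funext i
      rw [sub_zero, abs_of_nonneg (hpos i)]
    rwa [heq] at h1
  · intro h u hu f
    have heq : (fun i => f (|x i - 0| * u)) = fun α => f (x α * u) := by
      funext i
      rw [sub_zero, abs_of_nonneg (hpos i)]
    rw [heq]
    -- Step A : norm convergence of y
    have hclosure : (0 : E) ∈ closure (convexHull ℝ (Set.range y)) := by
      by_contra h0
      obtain ⟨f', c, hfc, hcb⟩ := geometric_hahn_banach_point_closed
        ((convex_convexHull ℝ _).closure) isClosed_closure h0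
      rw [map_zero] at hfc
      have hev : ∀ᶠ α in atTop, f' (y α) < c := (h f').eventually (gt_mem_nhds hfc)
      obtain ⟨α, hα⟩ := hev.exists
      exact absurd
        (hcb (y α) (subset_closure (subset_convexHull ℝ _ (Set.mem_range_self α)))) (not_lt.2 hα.le)
    have hnorm : Tendsto (fun α => ‖y α‖) atTop (𝓝 0) := by
      rw [Metric.tendsto_atTop]
      intro ε hε
      obtain ⟨z, hzmem, hzd⟩ := Metric.mem_closure_iff.1 hclosure ε hε
      rw [convexHull_eq] at hzmem
      obtain ⟨ι, t, w, p, hw0, hw1, hps, hct⟩ := hzmem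
      have ht : t.Nonempty := Finset.nonempty_of_sum_ne_zero (by rw [hw1]; exact one_ne_zero)
      have hps' : ∀ i : ι, ∃ α : A, i ∈ t → y α = p i := by
        intro i
        by_cases hi : i ∈ t
        · obtain ⟨α, hα⟩ := hps i hi; exact ⟨α, fun _ => hα⟩
        · exact ⟨Classical.arbitrary A, fun hh => absurd hh hi⟩
      choose β hβ using hps'
      set γ := t.sup' ht β with hγ
      have hle : y γ ≤ z := by
        rw [← hct, Finset.centerMass_eq_of_sum_1 t p hw1]
        have hyγ : y γ = ∑ i ∈ t, w i • y γ := by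
          rw [← Finset.sum_smul, hw1, one_smul]
        rw [hyγ]
        refine Finset.sum_le_sum ?_
        intro i hi
        have h1 : y γ ≤ p i := by
          rw [← hβ i hi]
          exact hyanti (Finset.le_sup' β hi)
        have h2 : 0 ≤ w i • (p i - y γ) := hsmul _ (hw0 i hi) _ (sub_nonneg.2 h1)
        rw [smul_sub] at h2
        exact sub_nonneg.1 h2
      refine ⟨γ, fun δ hδ => ?_⟩
      have h1 : ‖y δ‖ ≤ ‖z‖ := hsolid _ _ (by
        rw [abs_of_nonneg (hy0 δ)]
        exact ((hyanti hδ).trans hle).trans (le_abs_self z))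
      rw [Real.dist_0_eq_abs, abs_of_nonneg (norm_nonneg _)]
      rw [Metric.mem_closure_iff] at hclosure
      calc ‖y δ‖ ≤ ‖z‖ := h1
        _ < ε := by rwa [dist_eq_norm, zero_sub, norm_neg] at hzd
    -- Step B : norm convergence of x * u
    have htends : Tendsto (fun α => x α * u) atTop (𝓝 0) := by
      rw [Metric.tendsto_atTop]
      intro ε hε
      set α₀ := Classical.arbitrary A with hα₀
      set C := ‖x α₀‖ + 1 with hC
      have hCpos : (0 : ℝ) < C := by positivity
      have h2C : (0 : ℝ) < ε / (2 * C) := by positivity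
      obtain ⟨n, hn⟩ := Metric.tendsto_atTop.1 (hqi u hu) (ε / (2 * C)) h2C
      have hn' := hn n le_rfl
      rw [Real.dist_0_eq_abs, abs_of_nonneg (norm_nonneg _)] at hn'
      set v := u ⊓ (n : ℝ) • e with hv
      have hne : 0 ≤ (n : ℝ) • e := hsmul _ (by positivity) e he
      have hv0 : 0 ≤ v := le_inf hu hne
      have hεn : (0 : ℝ) < ε / (2 * (n + 1)) := by positivity
      obtain ⟨γ₁, hγ₁⟩ := Metric.tendsto_atTop.1 hnorm _ hεn
      refine ⟨γ₁ ⊔ α₀, fun δ hδ => ?_⟩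
      have hδ1 : γ₁ ≤ δ := le_trans le_sup_left hδ
      have hδ0 : α₀ ≤ δ := le_trans le_sup_right hδ
      have hyδ := hγ₁ δ hδ1
      rw [Real.dist_0_eq_abs, abs_of_nonneg (norm_nonneg _)] at hyδ
      rw [dist_zero_right]
      have hb1 : ‖x δ * (u - v)‖ ≤ ε / 2 := by
        have h1 : ‖x δ‖ ≤ ‖x α₀‖ := hsolid _ _ (by
          rw [abs_of_nonneg (hpos δ), abs_of_nonneg (hpos α₀)]
          exact hanti hδ0)
        calc ‖x δ * (u - v)‖ ≤ ‖x δ‖ * ‖u - v‖ := norm_mul_le _ _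
          _ ≤ C * (ε / (2 * C)) := by
              refine mul_le_mul (h1.trans (by rw [hC]; linarith)) hn'.le (norm_nonneg _) hCpos.le
          _ = ε / 2 := by field_simp
      have hb2 : ‖x δ * v‖ < ε / 2 := by
        have h1 : x δ * v ≤ (n : ℝ) • y δ := by
          have h1a := hmulmono (x δ) v ((n : ℝ) • e) (hpos δ) inf_le_right
          have h1b : x δ * ((n : ℝ) • e) = (n : ℝ) • (x δ * e) := by
            rw [Nat.cast_smul_eq_nsmul ℝ n e, Nat.cast_smul_eq_nsmul ℝ n (x δ * e)]
            exact mul_smul_comm n (x δ) e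
          rw [h1b] at h1a
          exact h1a
        have h2 : 0 ≤ x δ * v := hmulpos _ _ (hpos δ) hv0
        have h3 : ‖x δ * v‖ ≤ ‖(n : ℝ) • y δ‖ := hsolid _ _ (by
          rw [abs_of_nonneg h2]
          exact h1.trans (le_abs_self _))
        rw [norm_smul, Real.norm_natCast] at h3
        calc ‖x δ * v‖ ≤ (n : ℝ) * ‖y δ‖ := h3
          _ ≤ ((n : ℝ) + 1) * ‖y δ‖ := by nlinarith [norm_nonneg (y δ)]
          _ < ((n : ℝ) + 1) * (ε / (2 * ((n : ℝ) + 1))) := by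
              exact mul_lt_mul_of_pos_left hyδ (by positivity)
          _ = ε / 2 := by field_simp
      have hsplit : x δ * u = x δ * (u - v) + x δ * v := by
        rw [mul_sub, sub_add_cancel]
      calc ‖x δ * u‖ ≤ ‖x δ * (u - v)‖ + ‖x δ * v‖ := by
            rw [hsplit]; exact norm_add_le _ _
        _ < ε := by linarith
    have hf : Tendsto (fun α => f (x α * u)) atTop (𝓝 (f 0)) :=
      (f.continuous.tendsto 0).comp htends
    rwa [map_zero] at hf
end

section
/- Let E be a Banach f-algebra with order continuous norm and with a weak order unit e, and let (x_α) be a net in E with 0 ≤ x_α for all α and (x_α) decreasing (antitone). Then x_α →mw 0 if and only if the net x_α * e converges weakly to 0. -/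
open Filter Topology

section Aux

variable {E : Type*} [NonUnitalNormedCommRing E] [Lattice E]
    [CovariantClass E E (· + ·) (· ≤ ·)] [NormedSpace ℝ E]

/-- The positive cone is closed when the norm is solid. -/
lemma aux_cone_isClosed (hsolid : ∀ a b : E, |a| ≤ |b| → ‖a‖ ≤ ‖b‖) :
    IsClosed {a : E | 0 ≤ a} := by
  have hcont : Continuous fun a : E => (-a) ⊔ 0 := by
    apply LipschitzWith.continuous (K := 1)
    apply LipschitzWith.of_dist_le_mul
    intro a b
    rw [dist_eq_norm, dist_eq_norm]
    have h1 : |(-a) ⊔ 0 - (-b) ⊔ 0| ≤ |(-a) - (-b)| := abs_sup_sub_sup_le_abs _ _ _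
    have h2 := hsolid _ _ h1
    have h3 : ‖(-a) ⊔ 0 - (-b) ⊔ 0‖ ≤ ‖a - b‖ := by
      rw [neg_sub_neg] at h2
      exact h2.trans_eq (norm_sub_rev b a)
    simpa using h3
  have hset : {a : E | 0 ≤ a} = (fun a : E => (-a) ⊔ 0) ⁻¹' {0} := by
    ext a
    simp only [Set.mem_setOf_eq, Set.mem_preimage, Set.mem_singleton_iff, sup_eq_right,
      neg_nonpos]
  rw [hset]
  exact isClosed_singleton.preimage hcont

lemma aux_inf_add_le {a b c : E} (ha : 0 ≤ a) (hb : 0 ≤ b) (hc : 0 ≤ c) :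
    a ⊓ (b + c) ≤ a ⊓ b + a ⊓ c := by
  have h1 : a ⊓ (b + c) - a ≤ a ⊓ c :=
    le_trans (sub_nonpos.2 inf_le_left) (le_inf ha hc)
  have h2 : a ⊓ (b + c) - b ≤ a ⊓ c := by
    refine le_inf ?_ ?_
    · calc a ⊓ (b + c) - b ≤ a ⊓ (b + c) - 0 := by gcongr
        _ = a ⊓ (b + c) := sub_zero _
        _ ≤ a := inf_le_left
    · calc a ⊓ (b + c) - b ≤ (b + c) - b := by gcongr; exact inf_le_right
        _ = c := add_sub_cancel_left b c
  have key : a ⊓ (b + c) - a ⊓ b ≤ a ⊓ c := by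
    rw [sub_inf]
    exact sup_le h1 h2
  exact (sub_le_iff_le_add.1 key).trans_eq (add_comm _ _)

lemma aux_inf_nsmul_eq_zero {a b : E} (ha : 0 ≤ a) (hb : 0 ≤ b) (hab : a ⊓ b = 0) :
    ∀ n : ℕ, a ⊓ (n • b) = 0 := by
  intro n
  induction n with
  | zero => simpa using inf_eq_right.2 ha
  | succ k ih =>
    have h1 : a ⊓ ((k + 1) • b) ≤ a ⊓ (k • b) + a ⊓ b := by
      rw [succ_nsmul]
      exact aux_inf_add_le ha (nsmul_nonneg hb k) hb
    rw [ih, hab, add_zero] at h1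
    exact le_antisymm h1 (le_inf ha (nsmul_nonneg hb _))

lemma aux_nonneg_of_nsmul_nonneg {x : E} {n : ℕ} (h : 0 ≤ (n + 1) • x) : 0 ≤ x := by
  have h1 : -x ≤ n • x := by
    rw [neg_le_iff_add_nonneg]
    have : n • x + x = (n + 1) • x := (succ_nsmul x n).symm
    rwa [this]
  have h2 : n • x ≤ n • x⁺ := nsmul_le_nsmul_right (le_posPart x) n
  have h3 : x⁻ ≤ n • x⁺ := by
    rw [negPart_def]
    exact sup_le (h1.trans h2) (nsmul_nonneg (posPart_nonneg x) n)
  have h4 : x⁻ ⊓ (n • x⁺) = 0 :=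
    aux_inf_nsmul_eq_zero (negPart_nonneg x) (posPart_nonneg x)
      (by rw [inf_comm]; exact posPart_inf_negPart_eq_zero x) n
  have h5 : x⁻ = 0 := by
    rw [← inf_eq_left.2 h3, h4]
  have := posPart_sub_negPart x
  rw [h5, sub_zero] at this
  rw [← this]
  exact posPart_nonneg x

lemma aux_smul_nonneg (hsolid : ∀ a b : E, |a| ≤ |b| → ‖a‖ ≤ ‖b‖)
    {t : ℝ} {a : E} (ht : 0 ≤ t) (ha : 0 ≤ a) : 0 ≤ t • a := by
  have hS : IsClosed {s : ℝ | 0 ≤ s • a} :=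
    (aux_cone_isClosed hsolid).preimage (continuous_id.smul continuous_const)
  have hq : ∀ q : ℚ, 0 ≤ q → 0 ≤ (q : ℝ) • a := by
    intro q hq0
    have hden : (q.den : ℕ) • ((q : ℝ) • a) = (q.num.toNat : ℕ) • a := by
      rw [← Nat.cast_smul_eq_nsmul ℝ, ← Nat.cast_smul_eq_nsmul ℝ, smul_smul]
      congr 1
      have hnn : (q.num.toNat : ℤ) = q.num := Int.toNat_of_nonneg (Rat.num_nonneg.2 hq0)
      have hnum : ((q.num.toNat : ℕ) : ℝ) = (q.num : ℝ) := by exact_mod_cast hnn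
      have hd0 : ((q.den : ℕ) : ℝ) ≠ 0 := Nat.cast_ne_zero.2 q.den_nz
      rw [hnum, Rat.cast_def]
      field_simp
    have hd : q.den = (q.den - 1) + 1 := (Nat.succ_pred_eq_of_pos q.pos).symm
    apply aux_nonneg_of_nsmul_nonneg (n := q.den - 1)
    rw [← hd, hden]
    exact nsmul_nonneg ha _
  -- approximate t by rationals from above
  have hqs : ∀ n : ℕ, ∃ q : ℚ, t < (q : ℝ) ∧ (q : ℝ) < t + 1 / (n + 1) := by
    intro n
    exact exists_rat_btwn (lt_add_of_pos_right t (by positivity))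
  choose q hq1 hq2 using hqs
  have hmem : ∀ n : ℕ, ((q n : ℝ)) ∈ {s : ℝ | 0 ≤ s • a} := by
    intro n
    have : (0 : ℝ) < (q n : ℝ) := lt_of_le_of_lt ht (hq1 n)
    exact hq (q n) (by exact_mod_cast this.le)
  have htend : Tendsto (fun n : ℕ => ((q n : ℝ))) atTop (𝓝 t) := by
    have hupper : Tendsto (fun n : ℕ => t + 1 / ((n : ℝ) + 1)) atTop (𝓝 t) := by
      have : Tendsto (fun n : ℕ => 1 / ((n : ℝ) + 1)) atTop (𝓝 0) :=
        tendsto_one_div_add_atTop_nhds_zero_nat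
      simpa using tendsto_const_nhds.add this
    exact tendsto_of_tendsto_of_tendsto_of_le_of_le tendsto_const_nhds hupper
      (fun n => (hq1 n).le) (fun n => (hq2 n).le)
  exact hS.mem_of_tendsto htend (Eventually.of_forall hmem)

/-- Mazur-type lemma: a positive net dominated by an antitone weakly null net is norm null. -/
lemma aux_norm_tendsto (hsolid : ∀ a b : E, |a| ≤ |b| → ‖a‖ ≤ ‖b‖) [CompleteSpace E]
    {A : Type*} [Nonempty A] [SemilatticeSup A] {y c : A → E}
    (hy0 : ∀ α, 0 ≤ y α) (hyc : ∀ α, y α ≤ c α) (hcanti : Antitone c)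
    (hw : ∀ f : E →L[ℝ] ℝ, Tendsto (fun α => f (c α)) atTop (𝓝 0)) :
    Tendsto (fun α => ‖y α‖) atTop (𝓝 0) := by
  rw [NormedAddCommGroup.tendsto_nhds_zero]
  intro ε hε
  set C : Set E := convexHull ℝ (Set.range c) with hC
  -- 0 is in the norm closure of the convex hull of the range of `c`
  have h0 : (0 : E) ∈ closure C := by
    by_contra h0
    obtain ⟨f, s, hfs, hsf⟩ := geometric_hahn_banach_closed_point
      ((convex_convexHull ℝ _).closure) isClosed_closure h0
    rw [map_zero] at hsf
    have hall : ∀ α, f (c α) < s := fun α =>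
      hfs _ (subset_closure (subset_convexHull ℝ _ ⟨α, rfl⟩))
    have hev : ∀ᶠ α in atTop, s < f (c α) :=
      (hw f).eventually (eventually_gt_nhds hsf)
    obtain ⟨α, hα⟩ := hev.exists
    exact absurd (hall α) (not_lt.2 hα.le)
  -- pick an element of the convex hull of norm `< ε`
  obtain ⟨z, hzC, hz⟩ : ∃ z ∈ C, ‖z‖ < ε := by
    have := Metric.mem_closure_iff.1 h0 ε hε
    obtain ⟨z, hz1, hz2⟩ := this
    exact ⟨z, hz1, by rwa [dist_comm, dist_zero_right] at hz2⟩
  -- every element of the convex hull eventually dominates the net `y`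
  have hdom : C ⊆ {z : E | ∃ γ₀ : A, ∀ γ, γ₀ ≤ γ → y γ ≤ z} := by
    apply convexHull_min
    · rintro _ ⟨α, rfl⟩
      exact ⟨α, fun γ hγ => (hyc γ).trans (hcanti hγ)⟩
    · rintro p ⟨γ₁, hp⟩ q ⟨γ₂, hq⟩ a b ha hb hab
      refine ⟨γ₁ ⊔ γ₂, fun γ hγ => ?_⟩
      have h1 : a • y γ ≤ a • p := by
        have := aux_smul_nonneg hsolid ha (sub_nonneg.2 (hp γ (le_sup_left.trans hγ)))
        rw [smul_sub] at this
        exact sub_nonneg.1 this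
      have h2 : b • y γ ≤ b • q := by
        have := aux_smul_nonneg hsolid hb (sub_nonneg.2 (hq γ (le_sup_right.trans hγ)))
        rw [smul_sub] at this
        exact sub_nonneg.1 this
      calc y γ = a • y γ + b • y γ := by rw [← add_smul, hab, one_smul]
        _ ≤ a • p + b • q := add_le_add h1 h2
  obtain ⟨γ₀, hγ₀⟩ := hdom hzC
  filter_upwards [eventually_ge_atTop γ₀] with γ hγ
  have hyz : y γ ≤ z := hγ₀ γ hγ
  have hnorm : ‖y γ‖ ≤ ‖z‖ := by
    apply hsolid
    rw [abs_of_nonneg (hy0 γ), abs_of_nonneg ((hy0 γ).trans hyz)]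
    exact hyz
  calc ‖‖y γ‖‖ = ‖y γ‖ := norm_norm _
    _ ≤ ‖z‖ := hnorm
    _ < ε := hz

end Aux

/-- In an order continuous Banach `f`-algebra with weak order unit `e`, a positive
decreasing net satisfies `x_α →mw 0` iff `x_α * e` converges weakly to `0`. -/
theorem mw_iff_weakOrderUnit
    {E : Type*} [NonUnitalNormedCommRing E] [Lattice E]
    [CovariantClass E E (· + ·) (· ≤ ·)] [NormedSpace ℝ E] [CompleteSpace E]
    (hsolid : ∀ a b : E, |a| ≤ |b| → ‖a‖ ≤ ‖b‖)
    (hmulpos : ∀ a b : E, 0 ≤ a → 0 ≤ b → 0 ≤ a * b)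
    (hfalg : ∀ a b c : E, a ⊓ b = 0 → 0 ≤ c → (a * c) ⊓ b = 0)
    (hoc : ∀ {B : Type*} [Nonempty B] [SemilatticeSup B] (y : B → E),
      Antitone y → IsGLB (Set.range y) 0 → Tendsto (fun β => ‖y β‖) atTop (𝓝 0))
    (e : E) (he : 0 < e)
    (hwou : ∀ z : E, 0 ≤ z → z ⊓ e = 0 → z = 0)
    {A : Type*} [Nonempty A] [SemilatticeSup A]
    (x : A → E) (hpos : ∀ α : A, 0 ≤ x α) (hanti : Antitone x) :
    MWTendsto atTop x (0 : E) ↔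
      ∀ f : E →L[ℝ] ℝ, Tendsto (fun α => f (x α * e)) atTop (𝓝 0) := by
  have habs : ∀ α, |x α - 0| = x α := fun α => by
    rw [sub_zero, abs_of_nonneg (hpos α)]
  constructor
  · intro h f
    have := h e he.le f
    simpa only [habs] using this
  · intro hW u hu f
    simp only [habs]
    -- the nsmul-mul compatibility
    have hmuln : ∀ (v : E) (n : ℕ) (w : E), v * (n • w) = n • (v * w) := by
      intro v n w
      induction n with
      | zero => simp
      | succ k ih => rw [succ_nsmul, succ_nsmul, mul_add, ih]
    set v : ℕ → E := fun n => u ⊓ (n • e) with hv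
    have hvle : ∀ n, v n ≤ u := fun n => inf_le_left
    have hvnn : ∀ n, 0 ≤ v n := fun n => le_inf hu (nsmul_nonneg he.le n)
    have hmono : Monotone v := fun n m hnm =>
      le_inf inf_le_left (inf_le_right.trans (nsmul_le_nsmul_left he.le hnm))
    -- Step 1: ‖u - v n‖ → 0
    have hGLB1 : IsGLB (Set.range fun n => u - v n) 0 := by
      constructor
      · rintro _ ⟨n, rfl⟩
        exact sub_nonneg.2 (hvle n)
      · intro b hb
        set z := b ⊔ 0 with hz
        have hz0 : (0 : E) ≤ z := le_sup_right
        have hbz : ∀ n, z ≤ u - v n := fun n =>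
          sup_le (hb ⟨n, rfl⟩) (sub_nonneg.2 (hvle n))
        set w := z ⊓ e with hwdef
        have hw0 : (0 : E) ≤ w := le_inf hz0 he.le
        have hwe : w ≤ e := inf_le_right
        have hwz : w ≤ z := inf_le_left
        have hind : ∀ n : ℕ, n • w ≤ u := by
          intro n
          induction n with
          | zero => simpa using hu
          | succ k ih =>
            have h1 : k • w ≤ u ⊓ (k • e) :=
              le_inf ih (nsmul_le_nsmul_right hwe k)
            have h2 : v k ≤ u - z := le_sub_comm.1 (hbz k)
            calc (k + 1) • w = k • w + w := succ_nsmul w k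
              _ ≤ (u - z) + w := add_le_add (h1.trans h2) le_rfl
              _ ≤ (u - z) + z := add_le_add le_rfl hwz
              _ = u := sub_add_cancel u z
        have hwnorm : ∀ n : ℕ, (n : ℝ) * ‖w‖ ≤ ‖u‖ := by
          intro n
          have h := hsolid (n • w) u
            (by rw [abs_of_nonneg (nsmul_nonneg hw0 n), abs_of_nonneg hu]; exact hind n)
          rwa [← Nat.cast_smul_eq_nsmul ℝ, norm_smul, Real.norm_natCast] at h
        have hwzero : w = 0 := by
          by_contra hne
          have hpos' : 0 < ‖w‖ := norm_pos_iff.2 hne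
          obtain ⟨n, hn⟩ := exists_nat_gt (‖u‖ / ‖w‖)
          rw [div_lt_iff₀ hpos'] at hn
          linarith [hwnorm n]
        have hzz : z = 0 := hwou z hz0 hwzero
        calc b ≤ z := le_sup_left
          _ = 0 := hzz
    have hrem : Tendsto (fun n : ULift ℕ => ‖u - v n.down‖) atTop (𝓝 0) := by
      apply hoc (fun n : ULift ℕ => u - v n.down)
      · intro n m hnm
        exact sub_le_sub_left (hmono hnm) u
      · have : (Set.range fun n : ULift ℕ => u - v n.down) =
            (Set.range fun n : ℕ => u - v n) := by
          ext w
          constructor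
          · rintro ⟨n, rfl⟩; exact ⟨n.down, rfl⟩
          · rintro ⟨n, rfl⟩; exact ⟨ULift.up n, rfl⟩
        rw [this]
        exact hGLB1
    -- Step 2: for each n, ‖x α * v n‖ → 0
    have hstep4 : ∀ n : ℕ, Tendsto (fun α => ‖x α * v n‖) atTop (𝓝 0) := by
      intro n
      refine aux_norm_tendsto (c := fun α => n • (x α * e)) hsolid
        (fun α => hmulpos _ _ (hpos α) (hvnn n)) ?_ ?_ ?_
      · intro α
        have h := hmulpos (x α) (n • e - v n) (hpos α) (sub_nonneg.2 inf_le_right)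
        rw [mul_sub, hmuln] at h
        exact sub_nonneg.1 h
      · intro α β hab
        have h := nsmul_nonneg (hmulpos (x α - x β) e (sub_nonneg.2 (hanti hab)) he.le) n
        rw [sub_mul, nsmul_sub] at h
        exact sub_nonneg.1 h
      · intro g
        have hg : (fun α => g (n • (x α * e))) = fun α => (n : ℝ) * g (x α * e) := by
          funext α
          rw [map_nsmul, nsmul_eq_mul]
        rw [hg]
        simpa using (hW g).const_mul (n : ℝ)
    -- Step 3: epsilon argument
    rw [NormedAddCommGroup.tendsto_nhds_zero]
    intro ε hε
    have α₀ : A := Classical.arbitrary A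
    set M := ‖x α₀‖ with hM
    have hM0 : 0 ≤ M := norm_nonneg _
    have hd1 : (0 : ℝ) < ε / (2 * (‖f‖ * M + 1)) := by positivity
    obtain ⟨m, hm⟩ := (hrem.eventually (gt_mem_nhds hd1)).exists
    set n : ℕ := m.down with hndef
    have hn : ‖u - v n‖ < ε / (2 * (‖f‖ * M + 1)) := hm
    have hd2 : (0 : ℝ) < ε / (2 * (‖f‖ + 1)) := by positivity
    have hev1 : ∀ᶠ α in atTop, ‖x α * v n‖ < ε / (2 * (‖f‖ + 1)) :=
      (hstep4 n).eventually (gt_mem_nhds hd2)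
    have hev2 : ∀ᶠ α in atTop, α₀ ≤ α := eventually_ge_atTop α₀
    filter_upwards [hev1, hev2] with α h1 h2
    have hxM : ‖x α‖ ≤ M := hsolid _ _
      (by rw [abs_of_nonneg (hpos α), abs_of_nonneg (hpos α₀)]; exact hanti h2)
    have hsplit : x α * u = x α * v n + x α * (u - v n) := by
      rw [← mul_add, add_sub_cancel]
    have hA1 : ‖f‖ * ‖x α * v n‖ < ε / 2 := by
      have e1 : ‖f‖ * ‖x α * v n‖ ≤ ‖f‖ * (ε / (2 * (‖f‖ + 1))) :=
        mul_le_mul_of_nonneg_left h1.le (norm_nonneg f)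
      have e2 : ‖f‖ * (ε / (2 * (‖f‖ + 1))) < (‖f‖ + 1) * (ε / (2 * (‖f‖ + 1))) :=
        mul_lt_mul_of_pos_right (lt_add_one _) hd2
      have e3 : (‖f‖ + 1) * (ε / (2 * (‖f‖ + 1))) = ε / 2 := by
        have : (0 : ℝ) < ‖f‖ + 1 := by positivity
        field_simp
      linarith
    have hA2 : ‖f‖ * (‖x α‖ * ‖u - v n‖) < ε / 2 := by
      have e1 : ‖f‖ * (‖x α‖ * ‖u - v n‖) ≤ (‖f‖ * M) * ‖u - v n‖ := by
        rw [← mul_assoc]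
        exact mul_le_mul_of_nonneg_right
          (mul_le_mul_of_nonneg_left hxM (norm_nonneg f)) (norm_nonneg _)
      have e2 : (‖f‖ * M) * ‖u - v n‖ ≤ (‖f‖ * M) * (ε / (2 * (‖f‖ * M + 1))) :=
        mul_le_mul_of_nonneg_left hn.le (by positivity)
      have e3 : (‖f‖ * M) * (ε / (2 * (‖f‖ * M + 1))) <
          (‖f‖ * M + 1) * (ε / (2 * (‖f‖ * M + 1))) :=
        mul_lt_mul_of_pos_right (lt_add_one _) hd1
      have e4 : (‖f‖ * M + 1) * (ε / (2 * (‖f‖ * M + 1))) = ε / 2 := by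
        have : (0 : ℝ) < ‖f‖ * M + 1 := by positivity
        field_simp
      linarith
    calc ‖f (x α * u)‖ = ‖f (x α * v n) + f (x α * (u - v n))‖ := by
          rw [hsplit, map_add]
      _ ≤ ‖f (x α * v n)‖ + ‖f (x α * (u - v n))‖ := norm_add_le _ _
      _ ≤ ‖f‖ * ‖x α * v n‖ + ‖f‖ * (‖x α‖ * ‖u - v n‖) := by
          refine add_le_add (f.le_opNorm _) ((f.le_opNorm _).trans ?_)
          exact mul_le_mul_of_nonneg_left (norm_mul_le _ _) (norm_nonneg f)
      _ < ε := by linarith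
end

section
/- Let E be a separable Banach f-algebra. Then there exists a quasi-interior point e ≥ 0 of E such that for every decreasing (antitone) net (x_α) in E with 0 ≤ x_α for all α, one has x_α →mw 0 if and only if the net x_α * e converges weakly to 0. -/
open Filter Topology

set_option linter.unusedSectionVars false
set_option maxHeartbeats 1000000

section Helpers
variable {E : Type*} [NonUnitalNormedCommRing E] [Lattice E]
    [CovariantClass E E (· + ·) (· ≤ ·)] [NormedSpace ℝ E]
    (hsolid : ∀ a b : E, |a| ≤ |b| → ‖a‖ ≤ ‖b‖)

private local instance (priority := low) myOACG : IsOrderedAddMonoid E :=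
  { add_le_add_left := fun a b h c => by
      rw [add_comm a c, add_comm b c]; exact CovariantClass.elim c h }

include hsolid in
private lemma my_norm_abs (a : E) : ‖|a|‖ = ‖a‖ :=
  le_antisymm (hsolid _ _ (by rw [abs_abs])) (hsolid _ _ (by rw [abs_abs]))

include hsolid in
private lemma my_norm_le {a b : E} (ha : 0 ≤ a) (hab : a ≤ b) : ‖a‖ ≤ ‖b‖ :=
  hsolid _ _ (by rw [abs_of_nonneg ha, abs_of_nonneg (ha.trans hab)]; exact hab)

include hsolid in
private lemma my_nonneg_of_tendsto {ι : Type*} {l : Filter ι} [l.NeBot] {g : ι → E} {a : E}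
    (hg : ∀ᶠ i in l, 0 ≤ g i) (ht : Tendsto g l (𝓝 a)) : 0 ≤ a := by
  have key : ∀ᶠ i in l, ‖a⁻‖ ≤ ‖a - g i‖ := by
    filter_upwards [hg] with i hi
    refine hsolid _ _ ?_
    rw [abs_of_nonneg (negPart_nonneg a), negPart_def]
    refine sup_le ?_ (abs_nonneg _)
    calc -a ≤ g i - a := by simpa using add_le_add_right hi (-a)
    _ ≤ |g i - a| := le_abs_self _
    _ = |a - g i| := abs_sub_comm _ _
  have hn : Tendsto (fun i => ‖a - g i‖) l (𝓝 0) := by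
    have := tendsto_iff_norm_sub_tendsto_zero.mp ht
    simpa [norm_sub_rev] using this
  have h1 : ‖a⁻‖ ≤ 0 := ge_of_tendsto hn key
  have h2 : a⁻ = 0 := by simpa using norm_le_zero_iff.mp h1
  exact negPart_eq_zero.mp h2

private lemma my_pow2_reflect {a : E} : ∀ k : ℕ, 0 ≤ (2 ^ k) • a → 0 ≤ a := by
  intro k
  induction k generalizing a with
  | zero => simpa using id
  | succ n ih =>
    intro h
    have : 0 ≤ (2 ^ n) • (2 • a) := by
      rw [smul_smul, ← pow_succ]; exact h
    exact nsmul_two_semiclosed (ih this)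

include hsolid in
private lemma my_smul_nonneg {t : ℝ} (ht : 0 ≤ t) {x : E} (hx : 0 ≤ x) : 0 ≤ t • x := by
  have hq : ∀ k : ℕ, 0 ≤ ((⌈t * 2 ^ k⌉₊ : ℝ) / 2 ^ k) • x := by
    intro k
    apply my_pow2_reflect (k := k)
    have : (2 ^ k : ℕ) • (((⌈t * 2 ^ k⌉₊ : ℝ) / 2 ^ k) • x) = (⌈t * 2 ^ k⌉₊ : ℕ) • x := by
      rw [← Nat.cast_smul_eq_nsmul ℝ, ← Nat.cast_smul_eq_nsmul ℝ (⌈t * 2 ^ k⌉₊), smul_smul]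
      congr 1
      push_cast
      field_simp
    rw [this]
    exact nsmul_nonneg hx _
  refine my_nonneg_of_tendsto hsolid (l := atTop) (Eventually.of_forall hq) ?_
  rw [tendsto_iff_norm_sub_tendsto_zero]
  have hb : ∀ k : ℕ, ‖((⌈t * 2 ^ k⌉₊ : ℝ) / 2 ^ k) • x - t • x‖ ≤ (1 / 2 ^ k) * ‖x‖ := by
    intro k
    have hp : (0:ℝ) < 2 ^ k := by positivity
    rw [← sub_smul, norm_smul]
    gcongr
    rw [Real.norm_eq_abs]
    have h1 : t * 2 ^ k ≤ (⌈t * 2 ^ k⌉₊ : ℝ) := Nat.le_ceil _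
    have h2 : (⌈t * 2 ^ k⌉₊ : ℝ) < t * 2 ^ k + 1 := Nat.ceil_lt_add_one (by positivity)
    have heq : (⌈t * 2 ^ k⌉₊ : ℝ) / 2 ^ k - t = ((⌈t * 2 ^ k⌉₊ : ℝ) - t * 2 ^ k) / 2 ^ k := by
      field_simp
    rw [heq, abs_div, abs_of_pos hp, div_le_div_iff_of_pos_right hp]
    rw [abs_le]
    constructor <;> linarith
  refine squeeze_zero (fun k => norm_nonneg _) hb ?_
  have h3 : Tendsto (fun k : ℕ => ((1:ℝ) / 2) ^ k) atTop (𝓝 0) :=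
    tendsto_pow_atTop_nhds_zero_of_lt_one (by norm_num) (by norm_num)
  have h0 : Tendsto (fun k : ℕ => (1 / 2 ^ k : ℝ)) atTop (𝓝 0) := by
    simpa [div_pow] using h3
  simpa using h0.mul_const ‖x‖

include hsolid in
private lemma my_smul_le_smul {t : ℝ} (ht : 0 ≤ t) {x y : E} (hxy : x ≤ y) : t • x ≤ t • y := by
  have := my_smul_nonneg hsolid ht (sub_nonneg.mpr hxy)
  rw [smul_sub] at this
  exact sub_nonneg.mp this

include hsolid in
private lemma my_norm_tendsto {A : Type} [Nonempty A] [SemilatticeSup A] (z : A → E)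
    (hz : ∀ α, 0 ≤ z α) (hanti : Antitone z)
    (hw : ∀ f : E →L[ℝ] ℝ, Tendsto (fun α => f (z α)) atTop (𝓝 0)) :
    Tendsto (fun α => ‖z α‖) atTop (𝓝 0) := by
  rw [Metric.tendsto_atTop]
  intro ε hε
  have h0 : (0:E) ∈ closure (convexHull ℝ (Set.range z)) := by
    by_contra h0
    obtain ⟨f, u, hfs, hfx⟩ := geometric_hahn_banach_closed_point
      ((convex_convexHull ℝ _).closure) isClosed_closure h0
    have hlt : ∀ α, f (z α) < u :=
      fun α => hfs _ (subset_closure (subset_convexHull ℝ _ ⟨α, rfl⟩))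
    have hu : u < 0 := by simpa using hfx
    obtain ⟨α, hα⟩ := ((hw f).eventually (eventually_gt_nhds hu)).exists
    exact absurd (hlt α) (not_lt.mpr hα.le)
  obtain ⟨y, hy, hyn⟩ := Metric.mem_closure_iff.mp h0 ε hε
  rw [mem_convexHull_iff_exists_fintype] at hy
  obtain ⟨ι, hfin, w, p, hw₀, hw₁, hp, hyx⟩ := hy
  have hne : Nonempty ι := by
    by_contra h
    rw [not_nonempty_iff] at h
    rw [Finset.sum_eq_zero (fun i _ => (h.elim i))] at hw₁
    norm_num at hw₁
  choose g hg using fun i => hp i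
  set β : A := Finset.univ.sup' (Finset.univ_nonempty) g with hβ
  have hle : z β ≤ y := by
    calc z β = (∑ i, w i) • z β := by rw [hw₁, one_smul]
    _ = ∑ i, w i • z β := by rw [Finset.sum_smul]
    _ ≤ ∑ i, w i • p i := by
        refine Finset.sum_le_sum fun i _ => my_smul_le_smul hsolid (hw₀ i) ?_
        rw [← hg i]
        exact hanti (Finset.le_sup' g (Finset.mem_univ i))
    _ = y := hyx
  have hβn : ‖z β‖ < ε := by
    refine lt_of_le_of_lt (my_norm_le hsolid (hz β) hle) ?_
    have hd : dist (0:E) y = ‖y‖ := by simp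
    rw [hd] at hyn
    exact hyn
  refine ⟨β, fun α hα => ?_⟩
  rw [Real.dist_eq, sub_zero, abs_of_nonneg (norm_nonneg _)]
  exact lt_of_le_of_lt (my_norm_le hsolid (hz α) (hanti hα)) hβn

end Helpers

/-- In a separable Banach `f`-algebra there is a quasi-interior point `e` such that a
positive decreasing net satisfies `x_α →mw 0` iff `x_α * e` converges weakly to `0`. -/
theorem mw_iff_separable
    {E : Type*} [NonUnitalNormedCommRing E] [Lattice E]
    [CovariantClass E E (· + ·) (· ≤ ·)] [NormedSpace ℝ E] [CompleteSpace E]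
    (hsolid : ∀ a b : E, |a| ≤ |b| → ‖a‖ ≤ ‖b‖)
    (hmulpos : ∀ a b : E, 0 ≤ a → 0 ≤ b → 0 ≤ a * b)
    (hfalg : ∀ a b c : E, a ⊓ b = 0 → 0 ≤ c → (a * c) ⊓ b = 0)
    [TopologicalSpace.SeparableSpace E] :
    ∃ e : E, 0 ≤ e ∧
      (∀ z : E, 0 ≤ z → Tendsto (fun n : ℕ => ‖z - z ⊓ (n : ℝ) • e‖) atTop (𝓝 0)) ∧
      ∀ {A : Type} [Nonempty A] [SemilatticeSup A] (x : A → E),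
        (∀ α : A, 0 ≤ x α) → Antitone x →
        (MWTendsto atTop x (0 : E) ↔
          ∀ f : E →L[ℝ] ℝ, Tendsto (fun α => f (x α * e)) atTop (𝓝 0)) := by
  letI : IsOrderedAddMonoid E :=
    { add_le_add_left := fun a b h c => by
        rw [add_comm a c, add_comm b c]; exact CovariantClass.elim c h }
  obtain ⟨d, hd⟩ := TopologicalSpace.exists_dense_seq E
  set c : ℕ → ℝ := fun n => (1/2)^n / (1 + ‖d n‖) with hc_def
  have hc : ∀ n, 0 < c n := by
    intro n
    have : (0:ℝ) < 1 + ‖d n‖ := by positivity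
    positivity
  set w : ℕ → E := fun n => c n • |d n| with hw_def
  have hw0 : ∀ n, 0 ≤ w n := fun n => my_smul_nonneg hsolid (hc n).le (abs_nonneg _)
  have hwn : ∀ n, ‖w n‖ ≤ (1/2)^n := by
    intro n
    rw [hw_def]
    simp only
    rw [norm_smul, my_norm_abs hsolid, Real.norm_eq_abs, abs_of_pos (hc n)]
    have h1 : (0:ℝ) < 1 + ‖d n‖ := by positivity
    rw [hc_def]
    simp only
    rw [div_mul_eq_mul_div, div_le_iff₀ h1]
    have := norm_nonneg (d n)
    nlinarith [pow_pos (by norm_num : (0:ℝ) < 1/2) n]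
  have hsum : Summable w := by
    refine Summable.of_norm_bounded ?_ hwn
    exact summable_geometric_of_lt_one (by norm_num) (by norm_num)
  set e : E := ∑' n, w n with he_def
  have hS : Tendsto (fun m => ∑ i ∈ Finset.range m, w i) atTop (𝓝 e) :=
    hsum.hasSum.tendsto_sum_nat
  have he0 : 0 ≤ e := by
    refine my_nonneg_of_tendsto hsolid (l := atTop)
      (Eventually.of_forall fun m => ?_) hS
    exact Finset.sum_nonneg fun i _ => hw0 i
  have hew : ∀ k, w k ≤ e := by
    intro k
    rw [← sub_nonneg]
    refine my_nonneg_of_tendsto hsolid (l := atTop) (g := fun m => (∑ i ∈ Finset.range m, w i) - w k)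
      ?_ (hS.sub_const _)
    filter_upwards [eventually_ge_atTop (k+1)] with m hm
    have hk : k ∈ Finset.range m := Finset.mem_range.mpr (by omega)
    have := Finset.add_sum_erase _ w hk
    rw [← this, add_sub_cancel_left]
    exact Finset.sum_nonneg fun i _ => hw0 i
  have hquasi : ∀ z : E, 0 ≤ z → Tendsto (fun n : ℕ => ‖z - z ⊓ (n : ℝ) • e‖) atTop (𝓝 0) := by
    intro z hz
    rw [Metric.tendsto_atTop]
    intro ε hε
    obtain ⟨k, hk⟩ := Metric.denseRange_iff.mp hd z ε hε
    rw [dist_eq_norm] at hk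
    refine ⟨⌈1 / c k⌉₊, fun n hn => ?_⟩
    rw [Real.dist_eq, sub_zero, abs_of_nonneg (norm_nonneg _)]
    have hnc : 1 ≤ (n:ℝ) * c k := by
      have h1 : 1 / c k ≤ (n:ℝ) := by
        calc (1 / c k : ℝ) ≤ (⌈1 / c k⌉₊ : ℝ) := Nat.le_ceil _
        _ ≤ (n:ℝ) := by exact_mod_cast hn
      rw [div_le_iff₀ (hc k)] at h1
      linarith
    set t : ℝ := (n:ℝ) * c k with ht_def
    set v : E := |d k| with hv_def
    -- step 1 : 0 ≤ z - z ⊓ n•e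
    have hstep0 : 0 ≤ z - z ⊓ ((n:ℝ) • e) := sub_nonneg.mpr inf_le_left
    -- step 2 : z - z ⊓ n•e ≤ z - z ⊓ t•v
    have hwk : t • v ≤ (n:ℝ) • e := by
      rw [ht_def, ← smul_smul]
      exact my_smul_le_smul hsolid (Nat.cast_nonneg n) (hew k)
    have hstep2 : z - z ⊓ ((n:ℝ) • e) ≤ z - z ⊓ (t • v) := by
      have := inf_le_inf_left z hwk
      exact sub_le_sub_left this z
    -- step 3 : z - z ⊓ t•v ≤ |z - d k|
    have hid : z - z ⊓ (t • v) = z ⊔ (t • v) - t • v := by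
      rw [sub_eq_sub_iff_add_eq_add, add_comm (z ⊔ (t • v)) _, inf_add_sup]
    have hstep3 : z - z ⊓ (t • v) ≤ |z - d k| := by
      rw [hid, sub_le_iff_le_add]
      refine sup_le ?_ (le_add_of_nonneg_left (abs_nonneg _))
      have hv1 : v ≤ t • v := by
        have : 0 ≤ (t - 1) • v :=
          my_smul_nonneg hsolid (by linarith) (abs_nonneg (d k))
        rw [sub_smul, one_smul] at this
        exact sub_nonneg.mp this
      have hz1 : z - t • v ≤ |z - d k| := by
        calc z - t • v ≤ z - v := by exact sub_le_sub_left hv1 z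
        _ ≤ z - d k := sub_le_sub_left (le_abs_self _) z
        _ ≤ |z - d k| := le_abs_self _
      exact sub_le_iff_le_add.mp hz1
    calc ‖z - z ⊓ ((n:ℝ) • e)‖ ≤ ‖|z - d k|‖ :=
          my_norm_le hsolid hstep0 (hstep2.trans hstep3)
    _ = ‖z - d k‖ := my_norm_abs hsolid _
    _ < ε := hk
  refine ⟨e, he0, hquasi, ?_⟩
  intro A _ _ x hx hanti
  constructor
  · intro hmw f
    exact (hmw e he0 f).congr fun α => by rw [sub_zero, abs_of_nonneg (hx α)]
  · intro hwweak u hu f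
    have hz0 : ∀ α, 0 ≤ x α * e := fun α => hmulpos _ _ (hx α) he0
    have hzanti : Antitone (fun α => x α * e) := by
      intro α β hαβ
      rw [← sub_nonneg, ← sub_mul]
      exact hmulpos _ _ (sub_nonneg.mpr (hanti hαβ)) he0
    have hzn : Tendsto (fun α => ‖x α * e‖) atTop (𝓝 0) :=
      my_norm_tendsto hsolid _ hz0 hzanti hwweak
    have hnorm : Tendsto (fun α => ‖x α * u‖) atTop (𝓝 0) := by
      rw [Metric.tendsto_atTop]
      intro ε hε
      set α₀ : A := Classical.arbitrary A with hα₀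
      set C : ℝ := ‖x α₀‖ with hC
      have hC0 : 0 ≤ C := norm_nonneg _
      obtain ⟨n, hn⟩ := ((hquasi u hu).eventually
        (gt_mem_nhds (show (0:ℝ) < ε/(2*(C+1)) by positivity))).exists
      obtain ⟨β, hβ⟩ := Filter.eventually_atTop.mp
        (hzn.eventually (gt_mem_nhds (show (0:ℝ) < ε/(2*((n:ℝ)+1)) by positivity)))
      refine ⟨β ⊔ α₀, fun α hα => ?_⟩
      rw [Real.dist_eq, sub_zero, abs_of_nonneg (norm_nonneg _)]
      have hα1 : β ≤ α := le_trans le_sup_left hα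
      have hα2 : α₀ ≤ α := le_trans le_sup_right hα
      set un : E := u ⊓ ((n:ℝ) • e) with hun
      have hun0 : 0 ≤ un := le_inf hu (my_smul_nonneg hsolid (Nat.cast_nonneg n) he0)
      have hsplit : x α * u = x α * un + x α * (u - un) := by
        rw [← mul_add, add_sub_cancel]
      have hfirst : ‖x α * un‖ ≤ (n:ℝ) * ‖x α * e‖ := by
        have h1 : 0 ≤ x α * un := hmulpos _ _ (hx α) hun0
        have h2 : x α * un ≤ (n:ℝ) • (x α * e) := by
          rw [Nat.cast_smul_eq_nsmul, ← mul_smul_comm, ← sub_nonneg, ← mul_sub]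
          refine hmulpos _ _ (hx α) (sub_nonneg.mpr ?_)
          rw [hun, Nat.cast_smul_eq_nsmul]
          exact inf_le_right
        calc ‖x α * un‖ ≤ ‖(n:ℝ) • (x α * e)‖ := my_norm_le hsolid h1 h2
        _ = (n:ℝ) * ‖x α * e‖ := by
            rw [norm_smul, Real.norm_eq_abs, Nat.abs_cast]
      have hfirst' : ‖x α * un‖ < ε/2 := by
        have hze : ‖x α * e‖ < ε/(2*((n:ℝ)+1)) := hβ α hα1
        have : (n:ℝ) * ‖x α * e‖ ≤ (n:ℝ) * (ε/(2*((n:ℝ)+1))) :=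
          mul_le_mul_of_nonneg_left hze.le (Nat.cast_nonneg n)
        have hfin : (n:ℝ) * (ε/(2*((n:ℝ)+1))) < ε/2 := by
          have hD : (0:ℝ) < 2*((n:ℝ)+1) := by positivity
          have hq := div_mul_cancel₀ ε (ne_of_gt hD)
          have hs : (0:ℝ) < ε/(2*((n:ℝ)+1)) := by positivity
          nlinarith [show (0:ℝ) ≤ (n:ℝ) from Nat.cast_nonneg n]
        exact lt_of_le_of_lt (hfirst.trans this) hfin
      have hsecond : ‖x α * (u - un)‖ < ε/2 := by
        have hxc : ‖x α‖ ≤ C := my_norm_le hsolid (hx α) (hanti hα2)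
        have h1 : ‖x α * (u - un)‖ ≤ ‖x α‖ * ‖u - un‖ := norm_mul_le _ _
        have h2 : ‖x α‖ * ‖u - un‖ ≤ C * ‖u - un‖ :=
          mul_le_mul_of_nonneg_right hxc (norm_nonneg _)
        have h3 : C * ‖u - un‖ ≤ C * (ε/(2*(C+1))) :=
          mul_le_mul_of_nonneg_left hn.le hC0
        have h4 : C * (ε/(2*(C+1))) < ε/2 := by
          have hD : (0:ℝ) < 2*(C+1) := by positivity
          have hq := div_mul_cancel₀ ε (ne_of_gt hD)
          have hs : (0:ℝ) < ε/(2*(C+1)) := by positivity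
          nlinarith
        linarith
      calc ‖x α * u‖ = ‖x α * un + x α * (u - un)‖ := by rw [← hsplit]
      _ ≤ ‖x α * un‖ + ‖x α * (u - un)‖ := norm_add_le _ _
      _ < ε := by linarith
    refine squeeze_zero_norm (fun α => ?_) (by simpa using hnorm.const_mul ‖f‖)
    calc ‖f (|x α - 0| * u)‖ ≤ ‖f‖ * ‖|x α - 0| * u‖ := f.le_opNorm _
    _ = ‖f‖ * ‖x α * u‖ := by rw [sub_zero, abs_of_nonneg (hx α)]
end

section
/- Let E be an mw-complete Banach f-algebra. Then the following are equivalent: (1) E is mw-continuous; (2) whenever 0 ≤ x_α ↑ ≤ x in E (an increasing net of positive elements bounded above by x), the net (x_α) is mw-Cauchy; (3) every net (x_α) with x_α ↓ 0 (antitone with infimum 0) satisfies x_α →mw 0. -/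
set_option linter.unusedSectionVars false
set_option linter.unusedVariables false
set_option maxHeartbeats 1000000


open Filter Topology

/-- A net `x : A → E` order converges to `0` if there is a net `y : B → E`, antitone with
infimum `0`, such that for every `β` eventually `|x α| ≤ y β`. -/
def OrderTendstoZero {E : Type*} [Lattice E] [AddCommGroup E]
    {A : Type*} [Preorder A] (x : A → E) : Prop :=
  ∃ (B : Type) (iB : SemilatticeSup B) (_ : Nonempty B) (y : B → E),
    @Antitone B E iB.toPartialOrder.toPreorder _ y ∧ IsGLB (Set.range y) 0 ∧
      ∀ β : B, ∃ α₀ : A, ∀ α : A, α₀ ≤ α → |x α| ≤ y β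

/-- `E` is `mw`-continuous if every net order converging to `0` is `mw`-convergent to `0`. -/
def MWContinuous (E : Type*) [NonUnitalNormedCommRing E] [Lattice E] [NormedSpace ℝ E] : Prop :=
  ∀ {A : Type} [Nonempty A] [SemilatticeSup A] (x : A → E),
    OrderTendstoZero x → MWTendsto atTop x 0

/-- A net `x : A → E` is `mw`-Cauchy if the net `(x α - x α')` (indexed by `A × A`)
is `mw`-convergent to `0`. -/
def MWCauchy {E : Type*} [NonUnitalNormedCommRing E] [Lattice E] [NormedSpace ℝ E]
    {A : Type*} [Nonempty A] [SemilatticeSup A] (x : A → E) : Prop :=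
  MWTendsto atTop (fun p : A × A => x p.1 - x p.2) (0 : E)

/-- `E` is `mw`-complete if every `mw`-Cauchy net in `E` is `mw`-convergent. -/
def MWComplete (E : Type*) [NonUnitalNormedCommRing E] [Lattice E] [NormedSpace ℝ E] : Prop :=
  ∀ {A : Type} [Nonempty A] [SemilatticeSup A] (x : A → E),
    MWCauchy x → ∃ a : E, MWTendsto atTop x a

section Helpers

variable {E : Type*} [NonUnitalNormedCommRing E] [Lattice E]
  [CovariantClass E E (· + ·) (· ≤ ·)] [NormedSpace ℝ E]

lemma habs_le {a b : E} (h1 : a ≤ b) (h2 : -a ≤ b) : |a| ≤ b := by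
  have : |a| = a ⊔ -a := rfl
  rw [this]; exact sup_le h1 h2

/-- Riesz: for positives, `(a + b) ⊓ c ≤ a ⊓ c + b ⊓ c`. -/
lemma hinf_add (a b c : E) (ha : 0 ≤ a) (hb : 0 ≤ b) (hc : 0 ≤ c) :
    (a + b) ⊓ c ≤ a ⊓ c + b ⊓ c := by
  have h1 : (a + b) ⊓ c ≤ a + b ⊓ c := by
    have : a + b ⊓ c = (a + b) ⊓ (a + c) := add_inf b c a
    rw [this]
    exact le_inf inf_le_left (inf_le_right.trans (le_add_of_nonneg_left ha))
  have h2 : (a + b) ⊓ c - b ⊓ c ≤ a ⊓ c := by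
    refine le_inf (sub_le_iff_le_add.mpr h1) ?_
    calc (a + b) ⊓ c - b ⊓ c ≤ c - b ⊓ c := by
          exact sub_le_sub_right inf_le_right _
      _ ≤ c := by
          have : 0 ≤ b ⊓ c := le_inf hb hc
          simpa using sub_le_self c this
  exact sub_le_iff_le_add.mp h2

/-- disjointness is preserved by natural scaling. -/
lemma hdisj_nsmul (a b : E) (ha : 0 ≤ a) (hb : 0 ≤ b) (h : a ⊓ b = 0) (n : ℕ) :
    (n • a) ⊓ b = 0 := by
  induction n with
  | zero => simpa using le_antisymm inf_le_left (le_inf le_rfl hb)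
  | succ n ih =>
    have hle : ((n + 1) • a) ⊓ b ≤ 0 := by
      have : (n + 1) • a = n • a + a := succ_nsmul a n
      rw [this]
      calc (n • a + a) ⊓ b ≤ (n • a) ⊓ b + a ⊓ b :=
            hinf_add _ _ _ (nsmul_nonneg ha n) ha hb
        _ = 0 := by rw [ih, h, add_zero]
    exact le_antisymm hle (le_inf (nsmul_nonneg ha (n + 1)) hb)

/-- if `s, t ≥ 0` are disjoint then `(s - t)⁺ = s`. -/
lemma hposPart_sub (s t : E) (hs : 0 ≤ s) (ht : 0 ≤ t) (h : s ⊓ t = 0) : (s - t)⁺ = s := by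
  have h1 : (s - t)⁺ + t = s + t := by
    have : (s - t)⁺ + t = (s - t + t) ⊔ (0 + t) := by
      rw [posPart_def, sup_add]
    rw [this, sub_add_cancel, zero_add]
    have h2 : s ⊓ t + s ⊔ t = s + t := inf_add_sup s t
    rw [h, zero_add] at h2
    rw [h2]
  exact add_right_cancel h1

lemma hposPart_nsmul (n : ℕ) (z : E) : (n • z)⁺ = n • z⁺ := by
  have hd : (n • z⁺) ⊓ (n • z⁻) = 0 := by
    have h1 : (n • z⁺) ⊓ z⁻ = 0 :=
      hdisj_nsmul _ _ (posPart_nonneg z) (negPart_nonneg z) (posPart_inf_negPart_eq_zero z) n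
    have h1' : z⁻ ⊓ (n • z⁺) = 0 := by rw [inf_comm]; exact h1
    have h2 : (n • z⁻) ⊓ (n • z⁺) = 0 :=
      hdisj_nsmul _ _ (negPart_nonneg z) (nsmul_nonneg (posPart_nonneg z) n) h1' n
    rw [inf_comm]; exact h2
  have hz : n • z = n • z⁺ - n • z⁻ := by
    rw [← smul_sub, posPart_sub_negPart]
  rw [hz]
  exact hposPart_sub _ _ (nsmul_nonneg (posPart_nonneg z) n)
    (nsmul_nonneg (negPart_nonneg z) n) hd

lemma hnegPart_nsmul (n : ℕ) (z : E) : (n • z)⁻ = n • z⁻ := by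
  have : (n • z)⁻ = (-(n • z))⁺ := rfl
  rw [this, ← smul_neg, hposPart_nsmul]; rfl

lemma hnsmul_norm (n : ℕ) (z : E) : ‖n • z‖ = n * ‖z‖ := by
  rw [← Nat.cast_smul_eq_nsmul ℝ, norm_smul]
  simp


lemma hnsmul_nonneg_rev (hsolid : ∀ a b : E, |a| ≤ |b| → ‖a‖ ≤ ‖b‖)
    {n : ℕ} (hn : n ≠ 0) {w : E} (h : 0 ≤ n • w) : 0 ≤ w := by
  have h1 : (n • w)⁻ = 0 := negPart_eq_zero.mpr h
  rw [hnegPart_nsmul] at h1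
  have h2 : ‖n • w⁻‖ = 0 := by rw [h1, norm_zero]
  rw [hnsmul_norm] at h2
  have h3 : ‖w⁻‖ = 0 := by
    rcases mul_eq_zero.mp h2 with h | h
    · exact absurd (Nat.cast_eq_zero.mp h) hn
    · exact h
  have h4 : w⁻ = 0 := norm_eq_zero.mp h3
  have := posPart_sub_negPart w
  rw [h4, sub_zero] at this
  rw [← this]; exact posPart_nonneg w

/-- norm-Archimedean: if `0 ≤ b`, `0 ≤ c` and `n • b ≤ c` for all `n`, then `b = 0`. -/
lemma harch (hsolid : ∀ a b : E, |a| ≤ |b| → ‖a‖ ≤ ‖b‖)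
    {b c : E} (hb : 0 ≤ b) (hc : 0 ≤ c) (h : ∀ n : ℕ, n • b ≤ c) : b = 0 := by
  by_contra hne
  have hnorm : 0 < ‖b‖ := norm_pos_iff.mpr hne
  obtain ⟨n, hn⟩ := exists_nat_gt (‖c‖ / ‖b‖)
  have h1 : ‖n • b‖ ≤ ‖c‖ := by
    apply hsolid
    rw [abs_of_nonneg (nsmul_nonneg hb n), abs_of_nonneg hc]
    exact h n
  rw [hnsmul_norm] at h1
  have h2 : ‖c‖ / ‖b‖ < n := hn
  have := (div_lt_iff₀ hnorm).mp h2
  linarith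

lemma hmul_mono (hmulpos : ∀ a b : E, 0 ≤ a → 0 ≤ b → 0 ≤ a * b)
    {a b u : E} (h : a ≤ b) (hu : 0 ≤ u) : a * u ≤ b * u := by
  have := hmulpos (b - a) u (sub_nonneg.mpr h) hu
  rw [sub_mul] at this
  exact sub_nonneg.mp this

lemma habs_mul_le (hmulpos : ∀ a b : E, 0 ≤ a → 0 ≤ b → 0 ≤ a * b)
    (a u : E) (hu : 0 ≤ u) : |a * u| ≤ |a| * u := by
  have hdecomp : a * u = a⁺ * u - a⁻ * u := by rw [← sub_mul, posPart_sub_negPart]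
  have habs : |a| * u = a⁺ * u + a⁻ * u := by rw [← add_mul, posPart_add_negPart]
  have h1 : 0 ≤ a⁺ * u := hmulpos _ _ (posPart_nonneg a) hu
  have h2 : 0 ≤ a⁻ * u := hmulpos _ _ (negPart_nonneg a) hu
  rw [hdecomp, habs]
  refine habs_le ((sub_le_self _ h2).trans (le_add_of_nonneg_right h2)) ?_
  rw [neg_sub]
  exact (sub_le_self _ h1).trans (le_add_of_nonneg_left h1)

lemma hposPart_le_abs (x : E) : x⁺ ≤ |x| := by
  rw [posPart_def]
  exact sup_le (le_abs_self x) (abs_nonneg x)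

lemma hposPart_lip (a b : E) : |a⁺ - b⁺| ≤ |a - b| := by
  have key : ∀ x y : E, x⁺ - y⁺ ≤ (x - y)⁺ := by
    intro x y
    have h1 : x ≤ y⁺ + (x - y)⁺ := by
      calc x = y + (x - y) := by abel
        _ ≤ y⁺ + (x - y)⁺ := add_le_add (le_posPart y) (le_posPart (x - y))
    have h2 : (0 : E) ≤ y⁺ + (x - y)⁺ :=
      add_nonneg (posPart_nonneg y) (posPart_nonneg (x - y))
    have h3 : x⁺ ≤ y⁺ + (x - y)⁺ := by
      rw [posPart_def]; exact sup_le h1 h2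
    exact sub_le_iff_le_add.mpr (h3.trans_eq (add_comm _ _))
  refine habs_le ((key a b).trans (hposPart_le_abs _)) ?_
  rw [neg_sub]
  exact (key b a).trans ((hposPart_le_abs _).trans_eq (abs_sub_comm b a))

lemma hnegPart_lip (a b : E) : |a⁻ - b⁻| ≤ |a - b| := by
  have : a⁻ = (-a)⁺ := rfl
  have hb : b⁻ = (-b)⁺ := rfl
  rw [this, hb]
  have := hposPart_lip (-a) (-b)
  calc |(-a)⁺ - (-b)⁺| ≤ |-a - -b| := this
    _ = |a - b| := by rw [show (-a) - (-b) = b - a by abel, abs_sub_comm]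

lemma hcone_closed (hsolid : ∀ a b : E, |a| ≤ |b| → ‖a‖ ≤ ‖b‖) :
    IsClosed {w : E | 0 ≤ w} := by
  refine IsSeqClosed.isClosed ?_
  intro wn v hw hv
  have key : ∀ n, ‖v⁻‖ ≤ ‖v - wn n‖ := by
    intro n
    apply hsolid
    have h0 : (wn n)⁻ = 0 := negPart_eq_zero.mpr (hw n)
    have : v⁻ - (wn n)⁻ = v⁻ := by rw [h0, sub_zero]
    calc |v⁻| = |v⁻ - (wn n)⁻| := by rw [this]
      _ ≤ |v - wn n| := hnegPart_lip v (wn n)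
  have hlim : Tendsto (fun n => ‖v - wn n‖) atTop (𝓝 0) := by
    have : Tendsto (fun n => v - wn n) atTop (𝓝 (v - v)) :=
      tendsto_const_nhds.sub hv
    rw [sub_self] at this
    simpa using this.norm
  have : ‖v⁻‖ ≤ 0 := ge_of_tendsto hlim (Eventually.of_forall key)
  have h4 : v⁻ = 0 := norm_eq_zero.mp (le_antisymm this (norm_nonneg _))
  have := posPart_sub_negPart v
  rw [h4, sub_zero] at this
  show 0 ≤ v
  rw [← this]; exact posPart_nonneg v


lemma hsmul_nonneg (hsolid : ∀ a b : E, |a| ≤ |b| → ‖a‖ ≤ ‖b‖)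
    {t : ℝ} (ht : 0 ≤ t) {x : E} (hx : 0 ≤ x) : 0 ≤ t • x := by
  have hrat : ∀ q : ℚ, 0 ≤ (q : ℝ) → 0 ≤ (q : ℝ) • x := by
    intro q hq
    have hq' : 0 ≤ q := by exact_mod_cast hq
    have hden : (q.den : ℝ) ≠ 0 := by exact_mod_cast q.den_nz
    have hmul : ((q.den : ℝ)) * (q : ℝ) = ((q.num.toNat : ℕ) : ℝ) := by
      have h1 : ((q.num.toNat : ℕ) : ℝ) = ((q.num : ℤ) : ℝ) := by
        exact_mod_cast congrArg (fun z : ℤ => (z : ℝ)) (Int.toNat_of_nonneg (Rat.num_nonneg.mpr hq'))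
      rw [h1, Rat.cast_def]
      field_simp
    have key : q.den • ((q : ℝ) • x) = q.num.toNat • x := by
      rw [← Nat.cast_smul_eq_nsmul ℝ q.den, smul_smul, hmul, Nat.cast_smul_eq_nsmul]
    have hpos : 0 ≤ q.den • ((q : ℝ) • x) := by
      rw [key]; exact nsmul_nonneg hx _
    exact hnsmul_nonneg_rev hsolid q.den_nz hpos
  -- approximate t from above by rationals
  have H : ∀ n : ℕ, ∃ q : ℚ, t < (q : ℝ) ∧ (q : ℝ) < t + 1 / ((n : ℝ) + 1) := by
    intro n
    exact exists_rat_btwn (lt_add_of_pos_right t (by positivity))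
  choose q hq1 hq2 using H
  have htend : Tendsto (fun n : ℕ => ((q n : ℝ))) atTop (𝓝 t) := by
    have hupper : Tendsto (fun n : ℕ => t + 1 / ((n : ℝ) + 1)) atTop (𝓝 (t + 0)) :=
      tendsto_const_nhds.add tendsto_one_div_add_atTop_nhds_zero_nat
    rw [add_zero] at hupper
    exact tendsto_of_tendsto_of_tendsto_of_le_of_le tendsto_const_nhds hupper
      (fun n => (hq1 n).le) (fun n => (hq2 n).le)
  have htend2 : Tendsto (fun n : ℕ => (q n : ℝ) • x) atTop (𝓝 (t • x)) :=
    htend.smul_const x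
  have hmem : ∀ n, (q n : ℝ) • x ∈ {w : E | 0 ≤ w} :=
    fun n => hrat (q n) (ht.trans (hq1 n).le)
  exact (hcone_closed hsolid).mem_of_tendsto htend2 (Eventually.of_forall hmem)

/-- positive functionals detect positivity. -/
lemma hpos_detect (hsolid : ∀ a b : E, |a| ≤ |b| → ‖a‖ ≤ ‖b‖) [CompleteSpace E] {v : E}
    (h : ∀ k : E →L[ℝ] ℝ, (∀ w : E, 0 ≤ w → 0 ≤ k w) → 0 ≤ k v) : 0 ≤ v := by
  by_contra hv
  have hvK : v ∉ {w : E | 0 ≤ w} := hv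
  have hconv : Convex ℝ {w : E | 0 ≤ w} := by
    intro a ha b hb ta tb hta htb hsum
    exact add_nonneg (hsmul_nonneg hsolid hta ha) (hsmul_nonneg hsolid htb hb)
  obtain ⟨f, u, hfv, hfK⟩ :=
    geometric_hahn_banach_point_closed hconv (hcone_closed hsolid) hvK
  have hu0 : u < 0 := by simpa using hfK 0 (le_refl (0 : E))
  have hfpos : ∀ w : E, 0 ≤ w → 0 ≤ f w := by
    intro w hw
    by_contra hneg
    push_neg at hneg
    obtain ⟨n, hn⟩ := exists_nat_gt (u / f w)
    have h1 : u < f (n • w) := hfK _ (nsmul_nonneg hw n)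
    rw [map_nsmul, nsmul_eq_mul] at h1
    have h2 : (n : ℝ) * f w < u := (div_lt_iff_of_neg hneg).mp hn
    exact absurd h2 (not_lt.mpr h1.le)
  exact absurd (h f hfpos) (not_le.mpr (hfv.trans hu0))

lemma hglb_nsmul {A : Type*} [Nonempty A] [SemilatticeSup A] (x : A → E) (hx : Antitone x)
    (hglb : IsGLB (Set.range x) 0) : ∀ (n : ℕ) (z : E), (∀ α, z ≤ n • x α) → z ≤ 0 := by
  intro n
  induction n with
  | zero => intro z h; simpa using h (Classical.arbitrary A)
  | succ n ih =>
    intro z h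
    refine ih z fun β => ?_
    have hlb : z - n • x β ∈ lowerBounds (Set.range x) := by
      rintro w ⟨δ, rfl⟩
      have h1 : z ≤ n • x (δ ⊔ β) + x (δ ⊔ β) := by
        have := h (δ ⊔ β); rwa [succ_nsmul] at this
      have h2 : n • x (δ ⊔ β) ≤ n • x β := nsmul_le_nsmul_right (hx le_sup_right) n
      have h3 : x (δ ⊔ β) ≤ x δ := hx le_sup_left
      exact sub_le_iff_le_add'.mpr (h1.trans (add_le_add h2 h3))
    exact sub_nonpos.mp (hglb.2 hlb)

/-- order continuity of multiplication by a positive element. -/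
lemma hmul_ord_cont (hsolid : ∀ a b : E, |a| ≤ |b| → ‖a‖ ≤ ‖b‖)
    (hmulpos : ∀ a b : E, 0 ≤ a → 0 ≤ b → 0 ≤ a * b)
    (hfalg : ∀ a b c : E, a ⊓ b = 0 → 0 ≤ c → (a * c) ⊓ b = 0)
    {A : Type*} [Nonempty A] [SemilatticeSup A]
    (x : A → E) (hx : Antitone x) (hglb : IsGLB (Set.range x) 0) {u b : E} (hu : 0 ≤ u)
    (hb : ∀ α, b ≤ x α * u) : b ≤ 0 := by
  have hxpos : ∀ α, 0 ≤ x α := fun α => hglb.1 ⟨α, rfl⟩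
  have hxu : ∀ α, 0 ≤ x α * u := fun α => hmulpos _ _ (hxpos α) hu
  set b' := b⁺ with hb'def
  have hb'all : ∀ α, b' ≤ x α * u := fun α => by
    rw [hb'def, posPart_def]; exact sup_le (hb α) (hxu α)
  have hb'pos : 0 ≤ b' := posPart_nonneg b
  set c := b' * u with hcdef
  have hcpos : 0 ≤ c := hmulpos _ _ hb'pos hu
  have key : ∀ n : ℕ, n • b' ≤ c := by
    intro n
    have main : ∀ α, n • b' - c ≤ (n * n) • x α := by
      intro α
      set p := (b' - n • x α)⁺ with hpdef
      set q := (b' - n • x α)⁻ with hqdef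
      have hppos : 0 ≤ p := posPart_nonneg _
      have hqpos : 0 ≤ q := negPart_nonneg _
      have hqu : 0 ≤ q * u := hmulpos _ _ hqpos hu
      have hdisj : q ⊓ p = 0 := by
        rw [inf_comm]; exact posPart_inf_negPart_eq_zero _
      have hdisj2 : (q * u) ⊓ p = 0 := hfalg q p u hdisj hu
      have hdisj3 : (n • p) ⊓ (q * u) = 0 :=
        hdisj_nsmul p (q * u) hppos hqu (by rw [inf_comm]; exact hdisj2) n
      have hqq : q = (n • x α - b')⁺ := by
        have : q = (-(b' - n • x α))⁺ := rfl
        rw [this, neg_sub]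
      have h1 : n • x α ≤ q + b' := by
        rw [hqq]
        exact sub_le_iff_le_add.mp (le_posPart (n • x α - b'))
      have h2 : n • b' ≤ q * u + c := by
        calc n • b' ≤ n • (x α * u) := nsmul_le_nsmul_right (hb'all α) n
          _ = (n • x α) * u := ((AddMonoidHom.mulRight u).map_nsmul n (x α)).symm
          _ ≤ (q + b') * u := hmul_mono hmulpos h1 hu
          _ = q * u + c := by rw [add_mul, hcdef]
      have h3 : p ≤ b' := by
        have h3' : (b' - n • x α)⁺ ≤ b'⁺ :=
          posPart_mono (sub_le_self b' (nsmul_nonneg (hxpos α) n))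
        rwa [posPart_eq_self.mpr hb'pos] at h3'
      have h4 : n • p ≤ c := by
        have h5 : n • p - c ≤ q * u :=
          sub_le_iff_le_add.mpr ((nsmul_le_nsmul_right h3 n).trans h2)
        have h6 : (n • p - c)⁺ ≤ (n • p) ⊓ (q * u) := by
          refine le_inf ?_ ?_
          · have h6' : (n • p - c)⁺ ≤ (n • p)⁺ :=
            posPart_mono (sub_le_self (n • p) hcpos)
            rwa [posPart_eq_self.mpr (nsmul_nonneg hppos n)] at h6'
          · rw [posPart_def]; exact sup_le h5 hqu
        rw [hdisj3] at h6
        have h7 : n • p - c ≤ 0 := (le_posPart _).trans h6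
        exact sub_nonpos.mp h7
      have h8 : b' ≤ n • x α + p :=
        sub_le_iff_le_add'.mp (le_posPart (b' - n • x α))
      calc n • b' - c ≤ n • (n • x α + p) - c :=
            sub_le_sub_right (nsmul_le_nsmul_right h8 n) c
        _ = (n * n) • x α + (n • p - c) := by rw [nsmul_add, smul_smul]; abel
        _ ≤ (n * n) • x α + 0 := add_le_add le_rfl (sub_nonpos.mpr h4)
        _ = (n * n) • x α := add_zero _
    exact sub_nonpos.mp (hglb_nsmul x hx hglb (n * n) (n • b' - c) main)
  have hb0 : b' = 0 := harch hsolid hb'pos hcpos key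
  calc b ≤ b⁺ := le_posPart b
    _ = 0 := hb0


/-- Decomposition of a continuous functional into a difference of positive functionals. -/
lemma hdecomp (hsolid : ∀ a b : E, |a| ≤ |b| → ‖a‖ ≤ ‖b‖) (f : E →L[ℝ] ℝ) :
    ∃ g h : E →L[ℝ] ℝ, (∀ v : E, 0 ≤ v → 0 ≤ g v) ∧ (∀ v : E, 0 ≤ v → 0 ≤ h v) ∧
      ∀ x : E, f x = g x - h x := by
  classical
  set S : E → Set ℝ := fun v => f '' {w | 0 ≤ w ∧ w ≤ v} with hS
  set P : E → ℝ := fun v => sSup (S v) with hP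
  have hmem0 : ∀ v : E, 0 ≤ v → (0 : ℝ) ∈ S v := fun v hv => ⟨0, ⟨le_rfl, hv⟩, map_zero f⟩
  have hne : ∀ v : E, 0 ≤ v → (S v).Nonempty := fun v hv => ⟨0, hmem0 v hv⟩
  have hbddelt : ∀ v : E, 0 ≤ v → ∀ r ∈ S v, r ≤ ‖f‖ * ‖v‖ := by
    intro v hv r hr
    obtain ⟨w, ⟨hw0, hwv⟩, rfl⟩ := hr
    have hwn : ‖w‖ ≤ ‖v‖ := by
      apply hsolid
      rw [abs_of_nonneg hw0, abs_of_nonneg (hw0.trans hwv)]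
      exact hwv
    calc f w ≤ |f w| := le_abs_self _
      _ = ‖f w‖ := (Real.norm_eq_abs _).symm
      _ ≤ ‖f‖ * ‖w‖ := f.le_opNorm w
      _ ≤ ‖f‖ * ‖v‖ := mul_le_mul_of_nonneg_left hwn (norm_nonneg f)
  have hbdd : ∀ v : E, 0 ≤ v → BddAbove (S v) :=
    fun v hv => ⟨‖f‖ * ‖v‖, fun r hr => hbddelt v hv r hr⟩
  have hPnonneg : ∀ v : E, 0 ≤ v → 0 ≤ P v := fun v hv => le_csSup (hbdd v hv) (hmem0 v hv)
  have hPf : ∀ v : E, 0 ≤ v → f v ≤ P v :=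
    fun v hv => le_csSup (hbdd v hv) ⟨v, ⟨hv, le_rfl⟩, rfl⟩
  have hPle : ∀ v : E, 0 ≤ v → P v ≤ ‖f‖ * ‖v‖ := fun v hv => csSup_le (hne v hv) (hbddelt v hv)
  have hPzero : P 0 = 0 := by
    refine le_antisymm (csSup_le (hne 0 le_rfl) ?_) (hPnonneg 0 le_rfl)
    rintro r ⟨w, ⟨hw0, hw1⟩, rfl⟩
    have : w = 0 := le_antisymm hw1 hw0
    rw [this, map_zero]
  have hPadd : ∀ v w : E, 0 ≤ v → 0 ≤ w → P (v + w) = P v + P w := by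
    intro v w hv hw
    have hvw : (0 : E) ≤ v + w := add_nonneg hv hw
    apply le_antisymm
    · apply csSup_le (hne _ hvw)
      rintro r ⟨s, ⟨hs0, hsvw⟩, rfl⟩
      have h1 : (0 : E) ≤ s ⊓ v := le_inf hs0 hv
      have h2 : s ⊓ v ≤ v := inf_le_right
      have h3 : (0 : E) ≤ s - s ⊓ v := sub_nonneg.mpr inf_le_left
      have h4 : s - s ⊓ v ≤ w := by
        have hkey : s - s ⊓ v = (s - v)⁺ := by
          rw [sub_inf, sub_self, posPart_def, sup_comm]
        rw [hkey, posPart_def]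
        exact sup_le (sub_le_iff_le_add'.mpr hsvw) hw
      have hdec : f s = f (s ⊓ v) + f (s - s ⊓ v) := by
        rw [← map_add]
        congr 1
        abel
      rw [hdec]
      exact add_le_add (le_csSup (hbdd v hv) ⟨s ⊓ v, ⟨h1, h2⟩, rfl⟩)
        (le_csSup (hbdd w hw) ⟨s - s ⊓ v, ⟨h3, h4⟩, rfl⟩)
    · have step2 : ∀ a ∈ S v, ∀ b ∈ S w, a + b ≤ P (v + w) := by
        rintro a ⟨s, ⟨hs0, hsv⟩, rfl⟩ b ⟨r, ⟨hr0, hrw⟩, rfl⟩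
        rw [← map_add]
        exact le_csSup (hbdd _ hvw) ⟨s + r, ⟨add_nonneg hs0 hr0, add_le_add hsv hrw⟩, rfl⟩
      have step : ∀ a ∈ S v, a ≤ P (v + w) - P w := by
        intro a ha
        have h1 : P w ≤ P (v + w) - a :=
          csSup_le (hne w hw) fun b hb => le_sub_iff_add_le.mpr (by
            have := step2 a ha b hb; linarith)
        linarith
      have h2 : P v ≤ P (v + w) - P w := csSup_le (hne v hv) step
      linarith
  -- the candidate positive part
  set g0 : E → ℝ := fun x => P x⁺ - P x⁻ with hg0
  have hwp : ∀ a b : E, 0 ≤ a → 0 ≤ b → g0 (a - b) = P a - P b := by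
    intro a b ha hb
    have h1 : (a - b)⁺ + b = a + (a - b)⁻ :=
      sub_eq_sub_iff_add_eq_add.mp (posPart_sub_negPart (a - b))
    have h2 : P ((a - b)⁺) + P b = P a + P ((a - b)⁻) := by
      rw [← hPadd _ _ (posPart_nonneg _) hb, ← hPadd _ _ ha (negPart_nonneg _), h1]
    have : g0 (a - b) = P ((a - b)⁺) - P ((a - b)⁻) := rfl
    rw [this]
    linarith
  have hg0v : ∀ v : E, 0 ≤ v → g0 v = P v := by
    intro v hv
    have := hwp v 0 hv le_rfl
    rw [sub_zero, hPzero] at this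
    rw [this, sub_zero]
  have hadd : ∀ x y : E, g0 (x + y) = g0 x + g0 y := by
    intro x y
    have h : (x⁺ + y⁺) - (x⁻ + y⁻) = x + y := by
      have hx := posPart_sub_negPart x
      have hy := posPart_sub_negPart y
      calc (x⁺ + y⁺) - (x⁻ + y⁻) = (x⁺ - x⁻) + (y⁺ - y⁻) := by abel
        _ = x + y := by rw [hx, hy]
    calc g0 (x + y) = g0 ((x⁺ + y⁺) - (x⁻ + y⁻)) := by rw [h]
      _ = P (x⁺ + y⁺) - P (x⁻ + y⁻) :=
          hwp _ _ (add_nonneg (posPart_nonneg x) (posPart_nonneg y))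
            (add_nonneg (negPart_nonneg x) (negPart_nonneg y))
      _ = (P x⁺ + P y⁺) - (P x⁻ + P y⁻) := by
          rw [hPadd _ _ (posPart_nonneg x) (posPart_nonneg y),
            hPadd _ _ (negPart_nonneg x) (negPart_nonneg y)]
      _ = g0 x + g0 y := by simp only [hg0]; ring
  have hnormPart : ∀ x : E, ‖x⁺‖ ≤ ‖x‖ ∧ ‖x⁻‖ ≤ ‖x‖ := by
    intro x
    constructor
    · apply hsolid
      rw [abs_of_nonneg (posPart_nonneg x)]
      exact hposPart_le_abs x
    · apply hsolid
      rw [abs_of_nonneg (negPart_nonneg x)]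
      have : x⁻ = (-x)⁺ := rfl
      rw [this]
      exact (hposPart_le_abs (-x)).trans_eq (abs_neg x)
  have hbound : ∀ x : E, ‖g0 x‖ ≤ (2 * ‖f‖) * ‖x‖ := by
    intro x
    have h1 : 0 ≤ P x⁺ := hPnonneg _ (posPart_nonneg x)
    have h2 : 0 ≤ P x⁻ := hPnonneg _ (negPart_nonneg x)
    have h3 : P x⁺ ≤ ‖f‖ * ‖x⁺‖ := hPle _ (posPart_nonneg x)
    have h4 : P x⁻ ≤ ‖f‖ * ‖x⁻‖ := hPle _ (negPart_nonneg x)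
    have h5 : ‖f‖ * ‖x⁺‖ ≤ ‖f‖ * ‖x‖ :=
      mul_le_mul_of_nonneg_left (hnormPart x).1 (norm_nonneg f)
    have h6 : ‖f‖ * ‖x⁻‖ ≤ ‖f‖ * ‖x‖ :=
      mul_le_mul_of_nonneg_left (hnormPart x).2 (norm_nonneg f)
    have : ‖g0 x‖ = |P x⁺ - P x⁻| := rfl
    rw [this]
    rw [abs_le]
    constructor <;> nlinarith [norm_nonneg x, norm_nonneg f]
  set G : E →+ ℝ := AddMonoidHom.mk' g0 hadd with hG
  have hGcont : Continuous G := by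
    refine AddMonoidHomClass.continuous_of_bound G (2 * ‖f‖) ?_
    intro x
    exact hbound x
  set glin : E →L[ℝ] ℝ := G.toRealLinearMap hGcont with hglin
  have hglineq : ∀ x : E, glin x = g0 x := fun x => rfl
  refine ⟨glin, glin - f, ?_, ?_, ?_⟩
  · intro v hv
    rw [hglineq, hg0v v hv]
    exact hPnonneg v hv
  · intro v hv
    have : (glin - f) v = glin v - f v := rfl
    rw [this, hglineq, hg0v v hv]
    have := hPf v hv
    linarith
  · intro x
    have : (glin - f) x = glin x - f x := rfl
    rw [this]
    ring


lemma hk_mono {k : E →L[ℝ] ℝ} (hk : ∀ w : E, 0 ≤ w → 0 ≤ k w) {a b : E} (h : a ≤ b) :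
    k a ≤ k b := by
  have := hk (b - a) (sub_nonneg.mpr h)
  rw [map_sub] at this
  linarith

lemma hle_abs (w : E) : w ≤ |w| := by
  have : |w| = w ⊔ -w := rfl
  rw [this]; exact le_sup_left

lemma hneg_le_abs (w : E) : -w ≤ |w| := by
  have : |w| = w ⊔ -w := rfl
  rw [this]; exact le_sup_right

lemma habs_add (a b : E) : |a + b| ≤ |a| + |b| := by
  refine habs_le (add_le_add (hle_abs a) (hle_abs b)) ?_
  rw [neg_add]
  exact add_le_add (hneg_le_abs a) (hneg_le_abs b)

lemma habs_nonpos {w : E} (h : |w| ≤ 0) : w = 0 := by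
  refine le_antisymm ((hle_abs w).trans h) ?_
  exact neg_nonpos.mp ((hneg_le_abs w).trans h)

lemma hk_abs {k : E →L[ℝ] ℝ} (hk : ∀ w : E, 0 ≤ w → 0 ≤ k w) (w : E) : |k w| ≤ k |w| := by
  rw [abs_le]
  constructor
  · have := hk_mono hk (neg_le.mpr (hneg_le_abs w))
    rw [map_neg] at this
    linarith
  · exact hk_mono hk (hle_abs w)

lemma htendsto_pos (hsolid : ∀ a b : E, |a| ≤ |b| → ‖a‖ ≤ ‖b‖) {ι : Type*} {l : Filter ι}
    {F : ι → E}
    (h : ∀ k : E →L[ℝ] ℝ, (∀ w : E, 0 ≤ w → 0 ≤ k w) → Tendsto (fun i => k (F i)) l (𝓝 0)) :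
    ∀ f : E →L[ℝ] ℝ, Tendsto (fun i => f (F i)) l (𝓝 0) := by
  intro f
  obtain ⟨g, h', hgpos, hhpos, heq⟩ := hdecomp hsolid f
  have htend := (h g hgpos).sub (h h' hhpos)
  rw [sub_zero] at htend
  exact htend.congr fun i => (heq (F i)).symm

end Helpers

section Mains

variable {E : Type*} [NonUnitalNormedCommRing E] [Lattice E]
  [CovariantClass E E (· + ·) (· ≤ ·)] [NormedSpace ℝ E]

/-- Statement (2) holds unconditionally. -/
lemma main_p2 (hsolid : ∀ a b : E, |a| ≤ |b| → ‖a‖ ≤ ‖b‖)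
    (hmulpos : ∀ a b : E, 0 ≤ a → 0 ≤ b → 0 ≤ a * b)
    {A : Type} [Nonempty A] [SemilatticeSup A] (x : A → E) (z : E)
    (hpos : ∀ α : A, 0 ≤ x α) (hmono : Monotone x) (hbdd : ∀ α : A, x α ≤ z) :
    MWCauchy x := by
  intro u hu
  refine htendsto_pos hsolid ?_
  intro k hk
  have hsmono : ∀ ⦃α β : A⦄, α ≤ β → k (x α * u) ≤ k (x β * u) :=
    fun α β hab => hk_mono hk (hmul_mono hmulpos (hmono hab) hu)
  set s : A → ℝ := fun α => k (x α * u) with hsdef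
  have hsbdd : BddAbove (Set.range s) := by
    refine ⟨k (z * u), ?_⟩
    rintro r ⟨α, rfl⟩
    exact hk_mono hk (hmul_mono hmulpos (hbdd α) hu)
  have hstend : Tendsto s atTop (𝓝 (⨆ α, s α)) :=
    tendsto_atTop_ciSup (fun α β hab => hsmono hab) hsbdd
  set Ssup : ℝ := ⨆ α, s α with hSdef
  have hle : ∀ α, s α ≤ Ssup := fun α => le_ciSup hsbdd α
  have hub : ∀ p : A × A,
      k (|x p.1 - x p.2 - 0| * u) ≤ (Ssup - s p.1) + (Ssup - s p.2) := by
    intro p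
    have habs : |x p.1 - x p.2| ≤ (x (p.1 ⊔ p.2) - x p.1) + (x (p.1 ⊔ p.2) - x p.2) := by
      refine habs_le ?_ ?_
      · calc x p.1 - x p.2 ≤ x (p.1 ⊔ p.2) - x p.2 := sub_le_sub_right (hmono le_sup_left) _
          _ ≤ _ := le_add_of_nonneg_left (sub_nonneg.mpr (hmono le_sup_left))
      · rw [neg_sub]
        calc x p.2 - x p.1 ≤ x (p.1 ⊔ p.2) - x p.1 := sub_le_sub_right (hmono le_sup_right) _
          _ ≤ _ := le_add_of_nonneg_right (sub_nonneg.mpr (hmono le_sup_right))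
    have h1 := hk_mono hk (hmul_mono hmulpos habs hu)
    have h2 : ((x (p.1 ⊔ p.2) - x p.1) + (x (p.1 ⊔ p.2) - x p.2)) * u
        = (x (p.1 ⊔ p.2) * u - x p.1 * u) + (x (p.1 ⊔ p.2) * u - x p.2 * u) := by
      rw [add_mul, sub_mul, sub_mul]
    rw [h2, map_add, map_sub, map_sub] at h1
    have e0 : s (p.1 ⊔ p.2) = k (x (p.1 ⊔ p.2) * u) := rfl
    have e1 : s p.1 = k (x p.1 * u) := rfl
    have e2 : s p.2 = k (x p.2 * u) := rfl
    have l1 : s (p.1 ⊔ p.2) ≤ Ssup := hle _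
    rw [sub_zero]
    linarith
  have hlb : ∀ p : A × A, 0 ≤ k (|x p.1 - x p.2 - 0| * u) :=
    fun p => hk _ (hmulpos _ _ (abs_nonneg _) hu)
  have htend0 : Tendsto (fun p : A × A => (Ssup - s p.1) + (Ssup - s p.2)) atTop (𝓝 0) := by
    have h1 : Tendsto (fun p : A × A => s p.1) atTop (𝓝 Ssup) := by
      rw [← prod_atTop_atTop_eq]
      exact hstend.comp tendsto_fst
    have h2 : Tendsto (fun p : A × A => s p.2) atTop (𝓝 Ssup) := by
      rw [← prod_atTop_atTop_eq]
      exact hstend.comp tendsto_snd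
    have h3 : Tendsto (fun p : A × A => (Ssup - s p.1) + (Ssup - s p.2)) atTop
        (𝓝 ((Ssup - Ssup) + (Ssup - Ssup))) :=
      ((tendsto_const_nhds (x := Ssup)).sub h1).add ((tendsto_const_nhds (x := Ssup)).sub h2)
    simpa using h3
  exact squeeze_zero hlb hub htend0

lemma main_p1_imp_p3 (hP1 : MWContinuous E) :
    ∀ {A : Type} [Nonempty A] [SemilatticeSup A] (x : A → E),
      Antitone x → IsGLB (Set.range x) 0 → MWTendsto atTop x (0 : E) := by
  intro A _ _ x hanti hglb
  refine hP1 x ⟨A, inferInstance, inferInstance, x, hanti, hglb, ?_⟩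
  intro β
  refine ⟨β, fun α h => ?_⟩
  have h0 : 0 ≤ x α := hglb.1 ⟨α, rfl⟩
  rw [abs_of_nonneg h0]
  exact hanti h

lemma main_p3_imp_p1 (hsolid : ∀ a b : E, |a| ≤ |b| → ‖a‖ ≤ ‖b‖)
    (hmulpos : ∀ a b : E, 0 ≤ a → 0 ≤ b → 0 ≤ a * b)
    (hP3 : ∀ {A : Type} [Nonempty A] [SemilatticeSup A] (x : A → E),
      Antitone x → IsGLB (Set.range x) 0 → MWTendsto atTop x (0 : E)) :
    MWContinuous E := by
  intro A _ _ x hx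
  obtain ⟨B, iB, hneB, y, hyanti, hyglb, hdom⟩ := hx
  letI := iB
  haveI := hneB
  have hy0 : ∀ β, 0 ≤ y β := fun β => hyglb.1 ⟨β, rfl⟩
  have hymw : MWTendsto atTop y 0 := hP3 y hyanti hyglb
  intro u hu
  refine htendsto_pos hsolid ?_
  intro k hk
  refine Metric.tendsto_atTop.mpr ?_
  intro ε hε
  have hy' : Tendsto (fun β => k (y β * u)) atTop (𝓝 0) := by
    refine (hymw u hu k).congr fun β => ?_
    rw [sub_zero, abs_of_nonneg (hy0 β)]
  obtain ⟨β, hβ⟩ := (hy'.eventually (gt_mem_nhds hε)).exists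
  obtain ⟨α₀, hα₀⟩ := hdom β
  refine ⟨α₀, fun α hα => ?_⟩
  have h1 : |x α| ≤ y β := hα₀ α hα
  have h2 : k (|x α| * u) ≤ k (y β * u) := hk_mono hk (hmul_mono hmulpos h1 hu)
  have h3 : 0 ≤ k (|x α| * u) := hk _ (hmulpos _ _ (abs_nonneg _) hu)
  rw [Real.dist_eq]
  rw [sub_zero, sub_zero, abs_of_nonneg h3]
  exact lt_of_le_of_lt h2 hβ

lemma main_p2_imp_p3 [CompleteSpace E]
    (hsolid : ∀ a b : E, |a| ≤ |b| → ‖a‖ ≤ ‖b‖)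
    (hmulpos : ∀ a b : E, 0 ≤ a → 0 ≤ b → 0 ≤ a * b)
    (hfalg : ∀ a b c : E, a ⊓ b = 0 → 0 ≤ c → (a * c) ⊓ b = 0)
    (hcomplete : MWComplete E)
    (hP2 : ∀ {A : Type} [Nonempty A] [SemilatticeSup A] (x : A → E) (z : E),
      (∀ α : A, 0 ≤ x α) → Monotone x → (∀ α : A, x α ≤ z) → MWCauchy x) :
    ∀ {A : Type} [Nonempty A] [SemilatticeSup A] (x : A → E),
      Antitone x → IsGLB (Set.range x) 0 → MWTendsto atTop x (0 : E) := by
  intro A _ _ x hanti hglb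
  have hx0 : ∀ α, 0 ≤ x α := fun α => hglb.1 ⟨α, rfl⟩
  obtain ⟨α₀⟩ := (inferInstance : Nonempty A)
  set v : A → E := fun α => x α₀ - x (α ⊔ α₀) with hvdef
  have hvpos : ∀ α, 0 ≤ v α := fun α => sub_nonneg.mpr (hanti le_sup_right)
  have hvmono : Monotone v :=
    fun α β h => sub_le_sub_left (hanti (sup_le_sup_right h α₀)) _
  have hvbdd : ∀ α, v α ≤ x α₀ := fun α => sub_le_self _ (hx0 _)
  have hvC : MWCauchy v := hP2 v (x α₀) hvpos hvmono hvbdd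
  have hxC : MWCauchy x := by
    intro u hu f
    have h1 := hvC u hu f
    have hf : Tendsto (Prod.fst : A × A → A) atTop atTop := by
      rw [← prod_atTop_atTop_eq]; exact tendsto_fst
    have hs : Tendsto (Prod.snd : A × A → A) atTop atTop := by
      rw [← prod_atTop_atTop_eq]; exact tendsto_snd
    have hsup1 : Tendsto (fun p : A × A => p.1 ⊔ α₀) atTop atTop :=
      tendsto_atTop_mono (fun p => le_sup_left) hf
    have hsup2 : Tendsto (fun p : A × A => p.2 ⊔ α₀) atTop atTop :=
      tendsto_atTop_mono (fun p => le_sup_left) hs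
    have hm : Tendsto (fun p : A × A => ((p.1 ⊔ α₀, p.2 ⊔ α₀) : A × A)) atTop atTop := by
      have hmm := hsup1.prodMk hsup2
      rwa [prod_atTop_atTop_eq] at hmm
    have h2 := h1.comp hm
    refine Tendsto.congr' ?_ h2
    filter_upwards [eventually_ge_atTop ((α₀, α₀) : A × A)] with p hp
    have e1 : p.1 ⊔ α₀ = p.1 := sup_eq_left.mpr hp.1
    have e2 : p.2 ⊔ α₀ = p.2 := sup_eq_left.mpr hp.2
    show f (|v (p.1 ⊔ α₀) - v (p.2 ⊔ α₀) - 0| * u) = f (|x p.1 - x p.2 - 0| * u)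
    simp only [hvdef]
    have es : ∀ γ : A, (γ ⊔ α₀) ⊔ α₀ = γ ⊔ α₀ := fun γ => by rw [sup_assoc, sup_idem]
    rw [es p.1, es p.2, e1, e2]
    have earg : x α₀ - x p.1 - (x α₀ - x p.2) - 0 = x p.2 - x p.1 := by abel
    rw [earg, abs_sub_comm]
    rw [sub_zero]
  obtain ⟨a, ha⟩ := hcomplete x hxC
  intro u hu
  have step1 : ∀ k : E →L[ℝ] ℝ, (∀ w : E, 0 ≤ w → 0 ≤ k w) →
      ∀ α, k (|a| * u) ≤ k (x α * u) := by
    intro k hk α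
    have htd : Tendsto (fun β => k (|x β - a| * u)) atTop (𝓝 0) := ha u hu k
    have hbd : ∀ᶠ β in atTop, k (|a| * u) - k (x α * u) ≤ k (|x β - a| * u) := by
      filter_upwards [eventually_ge_atTop α] with β hβ
      have h1 : |a| ≤ |x β - a| + x β := by
        have e : a = (a - x β) + x β := by abel
        calc |a| = |(a - x β) + x β| := by rw [← e]
          _ ≤ |a - x β| + |x β| := habs_add _ _
          _ = |x β - a| + x β := by rw [abs_sub_comm, abs_of_nonneg (hx0 β)]
      have h2 : |a| * u ≤ |x β - a| * u + x β * u := by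
        have := hmul_mono hmulpos h1 hu
        rwa [add_mul] at this
      have h3 : k (|a| * u) ≤ k (|x β - a| * u) + k (x β * u) := by
        have := hk_mono hk h2
        rwa [map_add] at this
      have h4 : k (x β * u) ≤ k (x α * u) :=
        hk_mono hk (hmul_mono hmulpos (hanti hβ) hu)
      linarith
    have := ge_of_tendsto htd hbd
    linarith
  have step2 : ∀ α, |a| * u ≤ x α * u := by
    intro α
    have h0 : (0 : E) ≤ x α * u - |a| * u := by
      refine hpos_detect hsolid ?_
      intro k hk
      have := step1 k hk α
      rw [map_sub]
      linarith
    exact sub_nonneg.mp h0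
  have step3 : |a| * u = 0 := by
    have h1 : |a| * u ≤ 0 := hmul_ord_cont hsolid hmulpos hfalg x hanti hglb hu step2
    exact le_antisymm h1 (hmulpos _ _ (abs_nonneg a) hu)
  have step4 : a * u = 0 := by
    have h1 : |a * u| ≤ |a| * u := habs_mul_le hmulpos a u hu
    rw [step3] at h1
    exact habs_nonpos h1
  refine htendsto_pos hsolid ?_
  intro k hk
  have key : ∀ α, ‖k (|x α - 0| * u)‖ ≤ k (|x α - a| * u) := by
    intro α
    rw [Real.norm_eq_abs, sub_zero, abs_of_nonneg (hx0 α)]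
    have e1 : x α * u = (x α - a) * u := by rw [sub_mul, step4, sub_zero]
    rw [e1]
    calc |k ((x α - a) * u)| ≤ k |(x α - a) * u| := hk_abs hk _
      _ ≤ k (|x α - a| * u) := hk_mono hk (habs_mul_le hmulpos _ _ hu)
  exact squeeze_zero_norm key (ha u hu k)

end Mains

/-- In an `mw`-complete Banach `f`-algebra the following are equivalent:
(1) `E` is `mw`-continuous;
(2) `0 ≤ x_α ↑ ≤ x` implies `(x_α)` is `mw`-Cauchy;
(3) `x_α ↓ 0` implies `x_α →mw 0`. -/
theorem mwContinuous_tfae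
    {E : Type*} [NonUnitalNormedCommRing E] [Lattice E]
    [CovariantClass E E (· + ·) (· ≤ ·)] [NormedSpace ℝ E] [CompleteSpace E]
    (hsolid : ∀ a b : E, |a| ≤ |b| → ‖a‖ ≤ ‖b‖)
    (hmulpos : ∀ a b : E, 0 ≤ a → 0 ≤ b → 0 ≤ a * b)
    (hfalg : ∀ a b c : E, a ⊓ b = 0 → 0 ≤ c → (a * c) ⊓ b = 0)
    (hcomplete : MWComplete E) :
    (MWContinuous E ↔
      ∀ {A : Type} [Nonempty A] [SemilatticeSup A] (x : A → E) (z : E),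
        (∀ α : A, 0 ≤ x α) → Monotone x → (∀ α : A, x α ≤ z) → MWCauchy x) ∧
    ((∀ {A : Type} [Nonempty A] [SemilatticeSup A] (x : A → E) (z : E),
        (∀ α : A, 0 ≤ x α) → Monotone x → (∀ α : A, x α ≤ z) → MWCauchy x) ↔
      ∀ {A : Type} [Nonempty A] [SemilatticeSup A] (x : A → E),
        Antitone x → IsGLB (Set.range x) 0 → MWTendsto atTop x (0 : E)) := by
  have hp2 : ∀ {A : Type} [Nonempty A] [SemilatticeSup A] (x : A → E) (z : E),
      (∀ α : A, 0 ≤ x α) → Monotone x → (∀ α : A, x α ≤ z) → MWCauchy x := by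
    intro A _ _ x z hpos hmono hbdd
    exact main_p2 hsolid hmulpos x z hpos hmono hbdd
  refine ⟨⟨fun _ => hp2, fun hP2 => ?_⟩, ⟨fun hP2 => ?_, fun _ => hp2⟩⟩
  · exact main_p3_imp_p1 hsolid hmulpos
      (main_p2_imp_p3 hsolid hmulpos hfalg hcomplete hP2)
  · exact main_p2_imp_p3 hsolid hmulpos hfalg hcomplete hP2
end
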